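/- arXiv:2601.12408 — 9 statements merged into one kernel-verified Lean document; each statement's English description precedes it below -/
import Mathlib

section
/- Let A be a 2n×2n real symmetric positive semidefinite matrix with symplectic kernel, let M ∈ Sp(2n) satisfy M^T A M = D ⊕ D with D = diag(d_1(A),...,d_n(A)), and let x_1,...,x_n,y_1,...,y_n be the columns of M. Then A = Σ_{i=1}^n d_i(A) · J (x_i x_i^T + y_i y_i^T) J^T. -/
open Matrix BigOperators

/-- The standard symplectic form matrix `J = [[0, I], [-I, 0]]`. -/
def Jm (ι : Type*) [Fintype ι] [DecidableEq ι] : Matrix (ι ⊕ ι) (ι ⊕ ι) ℝ :=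
  Matrix.fromBlocks 0 1 (-1) 0

/-- A real `2n × 2n` matrix is symplectic if `Mᵀ J M = J`. -/
def IsSymplectic {ι : Type*} [Fintype ι] [DecidableEq ι]
    (M : Matrix (ι ⊕ ι) (ι ⊕ ι) ℝ) : Prop :=
  Mᵀ * Jm ι * M = Jm ι

/-- A subspace `W` of `ℝ^{2n}` is symplectic if every nonzero `u ∈ W` pairs
nontrivially via `J` with some `v ∈ W`. -/
def IsSymplecticSubspace {ι : Type*} [Fintype ι] [DecidableEq ι]
    (W : Submodule ℝ ((ι ⊕ ι) → ℝ)) : Prop :=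
  ∀ u ∈ W, u ≠ 0 → ∃ v ∈ W, u ⬝ᵥ (Jm ι).mulVec v ≠ 0

/-- `A` has symplectic kernel. -/
def HasSymplecticKernel {ι : Type*} [Fintype ι] [DecidableEq ι]
    (A : Matrix (ι ⊕ ι) (ι ⊕ ι) ℝ) : Prop :=
  IsSymplecticSubspace (LinearMap.ker A.mulVecLin)

/-- `d` is a vector of symplectic eigenvalues of `A` (Williamson diagonalization). -/
def IsSympSpectrum {ι : Type*} [Fintype ι] [DecidableEq ι]
    (A : Matrix (ι ⊕ ι) (ι ⊕ ι) ℝ) (d : ι → ℝ) : Prop :=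
  ∃ M : Matrix (ι ⊕ ι) (ι ⊕ ι) ℝ, IsSymplectic M ∧
    Mᵀ * A * M = Matrix.fromBlocks (Matrix.diagonal d) 0 0 (Matrix.diagonal d)

/-- Doubly stochastic matrix. -/
def DoublyStochastic {n : ℕ} (E : Matrix (Fin n) (Fin n) ℝ) : Prop :=
  (∀ i j, 0 ≤ E i j) ∧ (∀ i, ∑ j, E i j = 1) ∧ (∀ j, ∑ i, E i j = 1)

/-- Doubly superstochastic matrix: entrywise dominates a doubly stochastic matrix. -/
def DoublySuperstochastic {n : ℕ} (S : Matrix (Fin n) (Fin n) ℝ) : Prop :=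
  ∃ E, DoublyStochastic E ∧ ∀ i j, E i j ≤ S i j

/-- `X` lies in the convex hull of the symplectic orbit of `B`. -/
def InSympHull {ι : Type*} [Fintype ι] [DecidableEq ι]
    (B X : Matrix (ι ⊕ ι) (ι ⊕ ι) ℝ) : Prop :=
  ∃ (m : ℕ) (p : Fin m → ℝ) (M : Fin m → Matrix (ι ⊕ ι) (ι ⊕ ι) ℝ),
    (∀ i, 0 ≤ p i) ∧ (∑ i, p i = 1) ∧ (∀ i, IsSymplectic (M i)) ∧
    X = ∑ i, p i • ((M i)ᵀ * B * M i)

/-- Sum of the `k` smallest entries of `x`. -/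
noncomputable def psum {n : ℕ} (x : Fin n → ℝ) (k : ℕ) : ℝ :=
  ∑ j ∈ Finset.univ.filter (fun j : Fin n => (j : ℕ) < k), x (Tuple.sort x j)


section Aux
variable {ι : Type*} [Fintype ι] [DecidableEq ι]

lemma JtJ : (Jm ι)ᵀ * Jm ι = 1 := by
  simp [Jm, Matrix.fromBlocks_transpose, Matrix.fromBlocks_multiply, ← Matrix.fromBlocks_one]

lemma Jm_tr : (Jm ι)ᵀ = - Jm ι := by
  simp [Jm, Matrix.fromBlocks_transpose, Matrix.fromBlocks_neg]

lemma JDJt (d : ι → ℝ) :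
    Jm ι * Matrix.fromBlocks (Matrix.diagonal d) 0 0 (Matrix.diagonal d) * (Jm ι)ᵀ =
      Matrix.fromBlocks (Matrix.diagonal d) 0 0 (Matrix.diagonal d) := by
  simp only [Jm, Matrix.fromBlocks_transpose, Matrix.fromBlocks_multiply,
    Matrix.transpose_zero, Matrix.transpose_one, Matrix.transpose_neg]
  simp [Matrix.fromBlocks_multiply]

lemma MDMt (M : Matrix (ι ⊕ ι) (ι ⊕ ι) ℝ) (d : ι → ℝ) :
    M * Matrix.fromBlocks (Matrix.diagonal d) 0 0 (Matrix.diagonal d) * Mᵀ =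
    ∑ i, d i • (Matrix.vecMulVec (fun r => M r (Sum.inl i)) (fun r => M r (Sum.inl i)) +
         Matrix.vecMulVec (fun r => M r (Sum.inr i)) (fun r => M r (Sum.inr i))) := by
  ext r c
  simp [Matrix.mul_apply, Matrix.sum_apply, Matrix.vecMulVec_apply, Fintype.sum_sum_type,
    Matrix.fromBlocks, Matrix.diagonal, Finset.sum_mul, Finset.mul_sum, mul_ite, ite_mul,
    Finset.sum_ite_eq, Finset.sum_ite_eq', mul_comm, mul_left_comm, Finset.sum_add_distrib]

end Aux

/-- Representation of `A` via its Williamson decomposition: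
`A = ∑ i, d i • J (xᵢxᵢᵀ + yᵢyᵢᵀ) Jᵀ`, where `xᵢ, yᵢ` are the columns of `M`. -/
theorem stmt1 {n : ℕ} (A M : Matrix (Fin n ⊕ Fin n) (Fin n ⊕ Fin n) ℝ) (d : Fin n → ℝ)
    (hsymm : A.IsSymm) (hpsd : A.PosSemidef) (hker : HasSymplecticKernel A)
    (hM : IsSymplectic M) (hmono : Monotone d)
    (hd : Mᵀ * A * M = Matrix.fromBlocks (Matrix.diagonal d) 0 0 (Matrix.diagonal d)) :
    A = ∑ i : Fin n, d i •
      (Jm (Fin n) *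
        (Matrix.vecMulVec (fun r => M r (Sum.inl i)) (fun r => M r (Sum.inl i)) +
         Matrix.vecMulVec (fun r => M r (Sum.inr i)) (fun r => M r (Sum.inr i))) *
       (Jm (Fin n))ᵀ) := by
  have hM' : Mᵀ * Jm (Fin n) * M = Jm (Fin n) := hM
  have hNM : (Jm (Fin n))ᵀ * Mᵀ * Jm (Fin n) * M = 1 := by
    rw [mul_assoc, mul_assoc, ← mul_assoc Mᵀ, hM', JtJ]
  have hMN : M * ((Jm (Fin n))ᵀ * Mᵀ * Jm (Fin n)) = 1 := by
    rw [← mul_eq_one_comm]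
    simpa [Matrix.mul_assoc] using hNM
  have h3 : ((Jm (Fin n))ᵀ * Mᵀ * Jm (Fin n))ᵀ * Mᵀ = 1 := by
    rw [← Matrix.transpose_mul, hMN, Matrix.transpose_one]
  have hA : A = ((Jm (Fin n))ᵀ * Mᵀ * Jm (Fin n))ᵀ *
      (Matrix.fromBlocks (Matrix.diagonal d) 0 0 (Matrix.diagonal d)) *
      ((Jm (Fin n))ᵀ * Mᵀ * Jm (Fin n)) := by
    rw [← hd]
    calc A = (((Jm (Fin n))ᵀ * Mᵀ * Jm (Fin n))ᵀ * Mᵀ) * A *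
        (M * ((Jm (Fin n))ᵀ * Mᵀ * Jm (Fin n))) := by
          rw [h3, hMN, one_mul, Matrix.mul_one]
    _ = _ := by simp only [Matrix.mul_assoc]
  have hNt : ((Jm (Fin n))ᵀ * Mᵀ * Jm (Fin n))ᵀ = (Jm (Fin n))ᵀ * M * Jm (Fin n) := by
    simp only [Matrix.transpose_mul, Matrix.transpose_transpose, Jm_tr]
    simp [Matrix.mul_assoc, Jm_tr]
  have hA2 : A = Jm (Fin n) *
      (M * (Matrix.fromBlocks (Matrix.diagonal d) 0 0 (Matrix.diagonal d)) * Mᵀ) *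
      (Jm (Fin n))ᵀ := by
    rw [hA, hNt]
    have h5 : (Jm (Fin n))ᵀ * M * Jm (Fin n) *
        (Matrix.fromBlocks (Matrix.diagonal d) 0 0 (Matrix.diagonal d)) *
        ((Jm (Fin n))ᵀ * Mᵀ * Jm (Fin n)) =
        (Jm (Fin n))ᵀ * (M * (Jm (Fin n) *
          (Matrix.fromBlocks (Matrix.diagonal d) 0 0 (Matrix.diagonal d)) * (Jm (Fin n))ᵀ)
          * Mᵀ) * Jm (Fin n) := by
      simp only [Matrix.mul_assoc]
    rw [h5, JDJt, Jm_tr]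
    simp only [Matrix.neg_mul, Matrix.mul_neg, neg_neg]
  rw [hA2, MDMt, Finset.mul_sum, Finset.sum_mul]
  congr 1
  ext i
  rw [Matrix.mul_smul, Matrix.smul_mul]
end

section
/- Let A and B be 2n×2n real symmetric positive semidefinite matrices whose kernels are symplectic subspaces of R^{2n}. If the vector d(A) of symplectic eigenvalues of A is majorized by d(B), then there exist symplectic matrices M_π indexed by permutations π of {1,...,n} and a probability vector (p(π))_π such that A = Σ_π p(π) M_π^T B M_π. -/
open Matrix BigOperators

namespace Stmt3Aux

/-! ### Symplectic matrix lemmas -/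

variable {ι : Type*} [Fintype ι] [DecidableEq ι]

lemma Jm_eq_neg_J : Jm ι = -(Matrix.J ι ℝ) := by
  rw [Jm, Matrix.J, Matrix.fromBlocks_neg]
  norm_num

lemma isSymplectic_iff_mem (M : Matrix (ι ⊕ ι) (ι ⊕ ι) ℝ) :
    IsSymplectic M ↔ M ∈ Matrix.symplecticGroup ι ℝ := by
  rw [SymplecticGroup.mem_iff', IsSymplectic, Jm_eq_neg_J,
    Matrix.mul_neg, Matrix.neg_mul, neg_inj]

lemma symp_det {M : Matrix (ι ⊕ ι) (ι ⊕ ι) ℝ} (h : IsSymplectic M) : IsUnit M.det :=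
  SymplecticGroup.symplectic_det ((isSymplectic_iff_mem M).mp h)

lemma symp_mul {M N : Matrix (ι ⊕ ι) (ι ⊕ ι) ℝ} (hM : IsSymplectic M)
    (hN : IsSymplectic N) : IsSymplectic (M * N) := by
  unfold IsSymplectic at *
  have : (M * N)ᵀ * Jm ι * (M * N) = Nᵀ * (Mᵀ * Jm ι * M) * N := by
    rw [Matrix.transpose_mul]; noncomm_ring
  rw [this, hM]
  exact hN

lemma symp_inv {M : Matrix (ι ⊕ ι) (ι ⊕ ι) ℝ} (h : IsSymplectic M) :
    IsSymplectic M⁻¹ ∧ M * M⁻¹ = 1 ∧ M⁻¹ * M = 1 := by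
  have hu := symp_det h
  have h1 : M * M⁻¹ = 1 := Matrix.mul_nonsing_inv M hu
  have h2 : M⁻¹ * M = 1 := Matrix.nonsing_inv_mul M hu
  refine ⟨?_, h1, h2⟩
  unfold IsSymplectic at *
  calc (M⁻¹)ᵀ * Jm ι * M⁻¹ = (M⁻¹)ᵀ * (Mᵀ * Jm ι * M) * M⁻¹ := by rw [h]
    _ = (M * M⁻¹)ᵀ * Jm ι * (M * M⁻¹) := by rw [Matrix.transpose_mul]; noncomm_ring
    _ = Jm ι := by rw [h1]; simp

/-! ### Permutation block matrices -/

variable {n : ℕ}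

def Pm (σ : Equiv.Perm (Fin n)) : Matrix (Fin n) (Fin n) ℝ :=
  fun i j => if i = σ j then 1 else 0

lemma Pm_tmul (σ : Equiv.Perm (Fin n)) : (Pm σ)ᵀ * Pm σ = 1 := by
  ext i j
  rw [Matrix.mul_apply, Matrix.one_apply]
  simp only [Matrix.transpose_apply, Pm, ite_mul, one_mul, zero_mul]
  rw [Finset.sum_ite_eq' Finset.univ (σ i) (fun a => if a = σ j then (1:ℝ) else 0)]
  simp [Equiv.apply_eq_iff_eq]

lemma Pm_conj_diag (σ : Equiv.Perm (Fin n)) (d : Fin n → ℝ) :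
    (Pm σ)ᵀ * Matrix.diagonal d * Pm σ = Matrix.diagonal (d ∘ σ) := by
  rw [Matrix.mul_assoc]
  ext i j
  rw [Matrix.mul_apply]
  simp only [Matrix.transpose_apply, Pm, Matrix.diagonal_mul, ite_mul, one_mul, zero_mul]
  rw [Finset.sum_ite_eq' Finset.univ (σ i) (fun a => d a * (if a = σ j then (1:ℝ) else 0))]
  by_cases h : i = j
  · subst h; simp [Matrix.diagonal_apply_eq]
  · have : ¬ (σ i = σ j) := fun hc => h (σ.injective hc)
    simp [Matrix.diagonal_apply_ne _ h, this]

def Qm (σ : Equiv.Perm (Fin n)) : Matrix (Fin n ⊕ Fin n) (Fin n ⊕ Fin n) ℝ :=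
  Matrix.fromBlocks (Pm σ) 0 0 (Pm σ)

lemma Qm_symp (σ : Equiv.Perm (Fin n)) : IsSymplectic (Qm σ) := by
  unfold IsSymplectic Qm Jm
  rw [Matrix.fromBlocks_transpose, Matrix.fromBlocks_multiply, Matrix.fromBlocks_multiply]
  simp [Pm_tmul, Matrix.mul_neg]

lemma Qm_conj (σ : Equiv.Perm (Fin n)) (d : Fin n → ℝ) :
    (Qm σ)ᵀ * Matrix.fromBlocks (Matrix.diagonal d) 0 0 (Matrix.diagonal d) * Qm σ =
      Matrix.fromBlocks (Matrix.diagonal (d ∘ σ)) 0 0 (Matrix.diagonal (d ∘ σ)) := by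
  unfold Qm
  rw [Matrix.fromBlocks_transpose, Matrix.fromBlocks_multiply, Matrix.fromBlocks_multiply]
  simp [← Matrix.mul_assoc, Pm_conj_diag]

lemma L_sum (p : Equiv.Perm (Fin n) → ℝ) (v : Equiv.Perm (Fin n) → (Fin n → ℝ)) :
    Matrix.fromBlocks (Matrix.diagonal (∑ σ, p σ • v σ)) 0 0
        (Matrix.diagonal (∑ σ, p σ • v σ)) =
      ∑ σ, p σ • Matrix.fromBlocks (Matrix.diagonal (v σ)) 0 0 (Matrix.diagonal (v σ)) := by
  ext i j
  rw [Matrix.sum_apply]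
  rcases i with i | i <;> rcases j with j | j <;>
    by_cases h : i = j <;>
      simp [Matrix.fromBlocks, h, Matrix.diagonal, Finset.sum_apply, Pi.smul_apply, mul_comm]

lemma conj_sum (R : Matrix (Fin n ⊕ Fin n) (Fin n ⊕ Fin n) ℝ) (p : Equiv.Perm (Fin n) → ℝ)
    (X : Equiv.Perm (Fin n) → Matrix (Fin n ⊕ Fin n) (Fin n ⊕ Fin n) ℝ) :
    ∑ σ, p σ • (Rᵀ * X σ * R) = Rᵀ * (∑ σ, p σ • X σ) * R := by
  rw [Matrix.mul_sum, Matrix.sum_mul]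
  refine Finset.sum_congr rfl fun σ _ => ?_
  rw [Matrix.mul_smul, Matrix.smul_mul]

/-! ### Majorization: convex hull of permutations -/

def InPermHull (y x : Fin n → ℝ) : Prop :=
  ∃ p : Equiv.Perm (Fin n) → ℝ, (∀ σ, 0 ≤ p σ) ∧ (∑ σ, p σ = 1) ∧
    x = ∑ σ, p σ • (y ∘ σ)

lemma inPermHull_self (y : Fin n → ℝ) : InPermHull y y := by
  refine ⟨fun σ => if σ = 1 then 1 else 0, ?_, ?_, ?_⟩
  · intro σ; dsimp only; split <;> norm_num
  · simp
  · simp [ite_smul]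

lemma inPermHull_step (y x : Fin n → ℝ) (τ : Equiv.Perm (Fin n)) (t : ℝ)
    (ht0 : 0 ≤ t) (ht1 : t ≤ 1)
    (h : InPermHull (fun i => (1 - t) * y i + t * y (τ i)) x) : InPermHull y x := by
  obtain ⟨p, hp0, hp1, hpx⟩ := h
  refine ⟨fun σ => (1 - t) * p σ + t * p (τ⁻¹ * σ), ?_, ?_, ?_⟩
  · intro σ
    have := hp0 σ; have := hp0 (τ⁻¹ * σ); nlinarith
  · have h0 : ∑ σ, p (τ⁻¹ * σ) = 1 := by
      rw [← hp1]
      exact Fintype.sum_equiv (Equiv.mulLeft τ⁻¹) _ _ (fun σ => rfl)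
    rw [Finset.sum_add_distrib, ← Finset.mul_sum, ← Finset.mul_sum, hp1, h0]
    ring
  · funext i
    have h1 : x i = ∑ σ : Equiv.Perm (Fin n),
        ((1 - t) * p σ * y (σ i) + t * p σ * y (τ (σ i))) := by
      rw [hpx, Finset.sum_apply]
      refine Finset.sum_congr rfl fun σ _ => ?_
      simp [Pi.smul_apply, Function.comp]; ring
    rw [h1, Finset.sum_add_distrib, Finset.sum_apply]
    have h2 : ∑ σ : Equiv.Perm (Fin n), t * p σ * y (τ (σ i))
        = ∑ σ : Equiv.Perm (Fin n), t * p (τ⁻¹ * σ) * y (σ i) := by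
      refine Fintype.sum_equiv (Equiv.mulLeft τ) _ _ (fun σ => ?_)
      simp [Equiv.Perm.mul_apply]
    rw [h2, ← Finset.sum_add_distrib]
    refine Finset.sum_congr rfl fun σ _ => ?_
    simp [Pi.smul_apply, Function.comp]; ring

noncomputable def Psum (x : Fin n → ℝ) (k : ℕ) : ℝ :=
  ∑ j ∈ Finset.univ.filter (fun j : Fin n => (j : ℕ) < k), x j

lemma psum_top (z : Fin n → ℝ) : Psum z n = ∑ i, z i := by
  unfold Psum
  rw [Finset.filter_true_of_mem (fun i _ => i.isLt)]

lemma psum_sub (x y : Fin n → ℝ) (k : ℕ) :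
    Psum x k - Psum y k =
      ∑ j ∈ Finset.univ.filter (fun j : Fin n => (j : ℕ) < k), (x j - y j) := by
  unfold Psum; rw [Finset.sum_sub_distrib]

lemma key (x : Fin n → ℝ) (hx : Monotone x) :
    ∀ m : ℕ, ∀ y : Fin n → ℝ,
      (Finset.univ.filter (fun i => x i ≠ y i)).card ≤ m →
      (∀ k ≤ n, Psum y k ≤ Psum x k) →
      (∑ i, y i = ∑ i, x i) → InPermHull y x := by
  intro m
  induction m with
  | zero =>
    intro y hcard _ _
    have h0 : (Finset.univ.filter (fun i => x i ≠ y i)) = ∅ :=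
      Finset.card_eq_zero.mp (Nat.le_zero.mp hcard)
    have hxy : y = x := by
      funext i
      by_contra h
      have : i ∈ Finset.univ.filter (fun i => x i ≠ y i) :=
        Finset.mem_filter.mpr ⟨Finset.mem_univ _, fun h' => h h'.symm⟩
      simp [h0] at this
    rw [hxy]; exact inPermHull_self x
  | succ m ih =>
    intro y hcard hP hs
    by_cases hxy : y = x
    · rw [hxy]; exact inPermHull_self x
    have hSne : (Finset.univ.filter (fun i => x i ≠ y i)).Nonempty := by
      obtain ⟨i, hi⟩ := Function.ne_iff.mp hxy
      exact ⟨i, Finset.mem_filter.mpr ⟨Finset.mem_univ _, fun h => hi h.symm⟩⟩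
    set S := Finset.univ.filter (fun i => x i ≠ y i) with hSdef
    set j := S.min' hSne with hjdef
    have hjS : x j ≠ y j := (Finset.mem_filter.mp (S.min'_mem hSne)).2
    have hjmin : ∀ i, x i ≠ y i → j ≤ i := fun i hi =>
      S.min'_le i (Finset.mem_filter.mpr ⟨Finset.mem_univ _, hi⟩)
    have heq_lt : ∀ i : Fin n, i < j → x i = y i := by
      intro i h
      by_contra hne
      exact absurd (hjmin i hne) (not_le.mpr h)
    have hD : Psum x ((j : ℕ) + 1) - Psum y ((j : ℕ) + 1) = x j - y j := by
      rw [psum_sub]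
      refine Finset.sum_eq_single j ?_ ?_
      · intro i hi hij
        have hile : (i : ℕ) < (j : ℕ) + 1 := (Finset.mem_filter.mp hi).2
        have : i < j := lt_of_le_of_ne (Fin.le_def.mpr (Nat.lt_succ_iff.mp hile))
          hij
        rw [heq_lt i this]; ring
      · intro hj
        exfalso; apply hj
        refine Finset.mem_filter.mpr ⟨Finset.mem_univ _, ?_⟩
        exact Nat.lt_succ_self _
    have hyjxj : y j < x j := by
      have h1 := hP ((j : ℕ) + 1) (Nat.succ_le_of_lt j.isLt)
      rcases lt_or_eq_of_le (sub_nonneg.mpr h1) with h | h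
      · rw [hD] at h; linarith
      · rw [hD] at h; exact absurd h.symm (sub_ne_zero.mpr hjS)
    have hTne : (Finset.univ.filter (fun i : Fin n => j < i ∧ x i < y i)).Nonempty := by
      by_contra hno
      rw [Finset.not_nonempty_iff_eq_empty] at hno
      have hge : ∀ i : Fin n, ¬ ((i : ℕ) < (j : ℕ) + 1) → 0 ≤ x i - y i := by
        intro i hi
        have hji : j < i := Fin.lt_def.mpr (Nat.lt_of_succ_le (not_lt.mp hi))
        by_contra hneg
        have : i ∈ Finset.univ.filter (fun i : Fin n => j < i ∧ x i < y i) :=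
          Finset.mem_filter.mpr ⟨Finset.mem_univ _, hji, by linarith⟩
        simp [hno] at this
      have hsplit := Finset.sum_filter_add_sum_filter_not Finset.univ
        (fun i : Fin n => (i : ℕ) < (j : ℕ) + 1) (fun i => x i - y i)
      have htot : ∑ i, (x i - y i) = 0 := by
        rw [Finset.sum_sub_distrib, hs]; ring
      have hrest : 0 ≤ ∑ i ∈ Finset.univ.filter (fun i : Fin n => ¬ ((i : ℕ) < (j : ℕ) + 1)),
          (x i - y i) := Finset.sum_nonneg fun i hi => hge i (Finset.mem_filter.mp hi).2
      have hfirst : ∑ i ∈ Finset.univ.filter (fun i : Fin n => (i : ℕ) < (j : ℕ) + 1),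
          (x i - y i) = x j - y j := by rw [← psum_sub]; exact hD
      rw [hfirst, htot] at hsplit
      linarith
    set T := Finset.univ.filter (fun i : Fin n => j < i ∧ x i < y i) with hTdef
    set k := T.min' hTne with hkdef
    have hkT : j < k ∧ x k < y k := (Finset.mem_filter.mp (T.min'_mem hTne)).2
    have hkmin : ∀ i, j < i → x i < y i → k ≤ i := fun i h1 h2 =>
      T.min'_le i (Finset.mem_filter.mpr ⟨Finset.mem_univ _, h1, h2⟩)
    have hxjk : x j ≤ x k := hx (le_of_lt hkT.1)
    set δ := min (x j - y j) (y k - x k) with hδdef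
    have hδ : 0 < δ := lt_min (by linarith) (by linarith [hkT.2])
    have hyjk : y j < y k := by
      have h1 : δ ≤ y k - x k := min_le_right _ _
      linarith
    set t := δ / (y k - y j) with htdef
    have ht0 : 0 ≤ t := div_nonneg hδ.le (by linarith)
    have ht1 : t ≤ 1 := by
      rw [div_le_one (by linarith)]
      have := min_le_right (x j - y j) (y k - x k)
      linarith
    have hjk : j ≠ k := ne_of_lt hkT.1
    set y' : Fin n → ℝ := fun i => if i = j then y j + δ else if i = k then y k - δ else y i
      with hy'def
    have hy'j : y' j = y j + δ := by simp [hy'def]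
    have hy'k : y' k = y k - δ := by simp [hy'def, hjk.symm]
    have hy'o : ∀ i, i ≠ j → i ≠ k → y' i = y i := by
      intro i h1 h2; simp [hy'def, h1, h2]
    have h_combo : (fun i => (1 - t) * y i + t * y (Equiv.swap j k i)) = y' := by
      funext i
      by_cases h1 : i = j
      · subst h1
        rw [Equiv.swap_apply_left, hy'j]
        have : t * (y k - y j) = δ := div_mul_cancel₀ _ (by linarith)
        linarith [this]
      · by_cases h2 : i = k
        · subst h2
          rw [Equiv.swap_apply_right, hy'k]
          have : t * (y k - y j) = δ := div_mul_cancel₀ _ (by linarith)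
          linarith [this]
        · rw [Equiv.swap_apply_of_ne_of_ne h1 h2, hy'o i h1 h2]; ring
    have hPy' : ∀ m' : ℕ, Psum y' m' = Psum y m' +
        (if (j : ℕ) < m' then δ else 0) - (if (k : ℕ) < m' then δ else 0) := by
      intro m'
      have h1 : Psum y' m' - Psum y m' =
          ∑ i ∈ Finset.univ.filter (fun i : Fin n => (i : ℕ) < m'),
            ((if i = j then δ else 0) + (if i = k then -δ else 0)) := by
        rw [psum_sub]
        refine Finset.sum_congr rfl fun i _ => ?_
        by_cases h1 : i = j
        · subst h1; rw [hy'j, if_pos rfl, if_neg hjk]; ring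
        · by_cases h2 : i = k
          · subst h2; rw [hy'k, if_neg (Ne.symm hjk), if_pos rfl]; ring
          · rw [hy'o i h1 h2, if_neg h1, if_neg h2]; ring
      rw [Finset.sum_add_distrib, Finset.sum_ite_eq', Finset.sum_ite_eq'] at h1
      simp only [Finset.mem_filter, Finset.mem_univ, true_and] at h1
      split_ifs at h1 ⊢ <;> linarith
    have hjltk : (j : ℕ) < (k : ℕ) := Fin.lt_def.mp hkT.1
    have hP' : ∀ m' : ℕ, m' ≤ n → Psum y' m' ≤ Psum x m' := by
      intro m' hm'
      rw [hPy' m']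
      by_cases hk' : (k : ℕ) < m'
      · have hj' : (j : ℕ) < m' := lt_trans hjltk hk'
        rw [if_pos hj', if_pos hk']
        have := hP m' hm'
        linarith
      · by_cases hj' : (j : ℕ) < m'
        · rw [if_pos hj', if_neg hk']
          have hge : ∀ i ∈ Finset.univ.filter (fun i : Fin n => (i : ℕ) < m'),
              0 ≤ x i - y i := by
            intro i hi
            have him : (i : ℕ) < m' := (Finset.mem_filter.mp hi).2
            rcases lt_trichotomy i j with h | h | h
            · rw [heq_lt i h]; linarith
            · subst h; linarith
            · have hik : (i : ℕ) < (k : ℕ) := lt_of_lt_of_le him (not_lt.mp hk')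
              by_contra hneg
              exact absurd (hkmin i h (by linarith)) (not_le.mpr (Fin.lt_def.mpr hik))
          have hsingle : x j - y j ≤
              ∑ i ∈ Finset.univ.filter (fun i : Fin n => (i : ℕ) < m'), (x i - y i) :=
            Finset.single_le_sum hge (Finset.mem_filter.mpr ⟨Finset.mem_univ _, hj'⟩)
          rw [← psum_sub] at hsingle
          have h2 : δ ≤ x j - y j := min_le_left _ _
          linarith
        · rw [if_neg hj', if_neg hk']
          have := hP m' hm'
          linarith
    have hs' : ∑ i, y' i = ∑ i, x i := by
      have h1 := hPy' n
      rw [psum_top, psum_top] at h1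
      rw [if_pos j.isLt, if_pos k.isLt] at h1
      rw [h1, hs]
      ring
    have hsub : (Finset.univ.filter (fun i => x i ≠ y' i)) ⊆ S := by
      intro i hi
      have hi' : x i ≠ y' i := (Finset.mem_filter.mp hi).2
      refine Finset.mem_filter.mpr ⟨Finset.mem_univ _, ?_⟩
      by_cases h1 : i = j
      · subst h1; exact hjS
      · by_cases h2 : i = k
        · subst h2; exact ne_of_lt hkT.2
        · rw [← hy'o i h1 h2]; exact hi'
    have hstrict : ∃ w, w ∈ S ∧ w ∉ (Finset.univ.filter (fun i => x i ≠ y' i)) := by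
      rcases min_cases (x j - y j) (y k - x k) with ⟨h1, _⟩ | ⟨h1, _⟩
      · refine ⟨j, S.min'_mem hSne, ?_⟩
        have hδ1 : δ = x j - y j := hδdef.trans h1
        simp only [Finset.mem_filter, Finset.mem_univ, true_and, not_ne_iff]
        rw [hy'j, hδ1]; ring
      · refine ⟨k, Finset.mem_filter.mpr ⟨Finset.mem_univ _, ne_of_lt hkT.2⟩, ?_⟩
        have hδ1 : δ = y k - x k := hδdef.trans h1
        simp only [Finset.mem_filter, Finset.mem_univ, true_and, not_ne_iff]
        rw [hy'k, hδ1]; ring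
    have hcard' : (Finset.univ.filter (fun i => x i ≠ y' i)).card ≤ m := by
      obtain ⟨w, hw1, hw2⟩ := hstrict
      have hss : (Finset.univ.filter (fun i => x i ≠ y' i)) ⊂ S :=
        Finset.ssubset_iff_of_subset hsub |>.mpr ⟨w, hw1, hw2⟩
      have := Finset.card_lt_card hss
      omega
    have hih := ih y' hcard' hP' hs'
    refine inPermHull_step y x (Equiv.swap j k) t ht0 ht1 ?_
    rw [h_combo]
    exact hih

end Stmt3Aux

/-- If `d(A) ≺ d(B)` then `A` lies in the convex hull of the symplectic orbit of `B`,
with the convex combination indexed by permutations. -/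
theorem stmt3 {n : ℕ} (A B : Matrix (Fin n ⊕ Fin n) (Fin n ⊕ Fin n) ℝ)
    (dA dB : Fin n → ℝ)
    (hAsymm : A.IsSymm) (hApsd : A.PosSemidef) (hAker : HasSymplecticKernel A)
    (hBsymm : B.IsSymm) (hBpsd : B.PosSemidef) (hBker : HasSymplecticKernel B)
    (hdA : IsSympSpectrum A dA) (hmA : Monotone dA)
    (hdB : IsSympSpectrum B dB) (hmB : Monotone dB)
    (hmaj : ∀ k : ℕ, k ≤ n →
      ∑ j ∈ Finset.univ.filter (fun j : Fin n => (j : ℕ) < k), dB j ≤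
      ∑ j ∈ Finset.univ.filter (fun j : Fin n => (j : ℕ) < k), dA j)
    (hsum : ∑ j, dA j = ∑ j, dB j) :
    ∃ (p : Equiv.Perm (Fin n) → ℝ)
      (M : Equiv.Perm (Fin n) → Matrix (Fin n ⊕ Fin n) (Fin n ⊕ Fin n) ℝ),
      (∀ π, 0 ≤ p π) ∧ (∑ π, p π = 1) ∧ (∀ π, IsSymplectic (M π)) ∧
      A = ∑ π, p π • ((M π)ᵀ * B * (M π)) := by
  classical
  obtain ⟨NA, hNAs, hNA⟩ := hdA
  obtain ⟨NB, hNBs, hNB⟩ := hdB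
  have hmaj' : ∀ k ≤ n, Stmt3Aux.Psum dB k ≤ Stmt3Aux.Psum dA k := by
    intro k hk
    simpa [Stmt3Aux.Psum] using hmaj k hk
  obtain ⟨p, hp0, hp1, hpd⟩ := Stmt3Aux.key dA hmA
    (Finset.univ.filter (fun i => dA i ≠ dB i)).card dB le_rfl hmaj' hsum.symm
  obtain ⟨hNAi, hNA1, hNA2⟩ := Stmt3Aux.symp_inv hNAs
  refine ⟨p, fun σ => NB * Stmt3Aux.Qm σ * NA⁻¹, hp0, hp1,
    fun σ => Stmt3Aux.symp_mul (Stmt3Aux.symp_mul hNBs (Stmt3Aux.Qm_symp σ)) hNAi, ?_⟩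
  have hterm : ∀ σ : Equiv.Perm (Fin n),
      (NB * Stmt3Aux.Qm σ * NA⁻¹)ᵀ * B * (NB * Stmt3Aux.Qm σ * NA⁻¹) =
        (NA⁻¹)ᵀ * Matrix.fromBlocks (Matrix.diagonal (dB ∘ σ)) 0 0
          (Matrix.diagonal (dB ∘ σ)) * NA⁻¹ := by
    intro σ
    have h1 : (NB * Stmt3Aux.Qm σ * NA⁻¹)ᵀ * B * (NB * Stmt3Aux.Qm σ * NA⁻¹) =
        (NA⁻¹)ᵀ * ((Stmt3Aux.Qm σ)ᵀ * (NBᵀ * B * NB) * Stmt3Aux.Qm σ) * NA⁻¹ := by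
      rw [Matrix.transpose_mul, Matrix.transpose_mul]; noncomm_ring
    rw [h1, hNB, Stmt3Aux.Qm_conj]
  calc A = (NA * NA⁻¹)ᵀ * A * (NA * NA⁻¹) := by rw [hNA1]; simp
    _ = (NA⁻¹)ᵀ * (NAᵀ * A * NA) * NA⁻¹ := by
        rw [Matrix.transpose_mul]; noncomm_ring
    _ = (NA⁻¹)ᵀ * Matrix.fromBlocks (Matrix.diagonal dA) 0 0 (Matrix.diagonal dA) * NA⁻¹ := by
        rw [hNA]
    _ = (NA⁻¹)ᵀ * (∑ σ, p σ • Matrix.fromBlocks (Matrix.diagonal (dB ∘ σ)) 0 0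
          (Matrix.diagonal (dB ∘ σ))) * NA⁻¹ := by
        rw [hpd, Stmt3Aux.L_sum]
    _ = ∑ σ, p σ • ((NA⁻¹)ᵀ * Matrix.fromBlocks (Matrix.diagonal (dB ∘ σ)) 0 0
          (Matrix.diagonal (dB ∘ σ)) * NA⁻¹) := by
        rw [Stmt3Aux.conj_sum]
    _ = ∑ σ, p σ • ((NB * Stmt3Aux.Qm σ * NA⁻¹)ᵀ * B * (NB * Stmt3Aux.Qm σ * NA⁻¹)) := by
        refine Finset.sum_congr rfl fun σ _ => ?_
        rw [hterm σ]
end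

section
/- There exist 4×4 real symmetric positive definite matrices A and B such that A lies in the convex hull of the symplectic orbit of B, but the symplectic spectrum of A is not majorized by the symplectic spectrum of B. Explicitly, with B = I_4, M_1 = I_4, M_2 = 2I_2 ⊕ (1/2)I_2, and A = (1/2)M_1^T B M_1 + (1/2)M_2^T B M_2 = (5/2)I_2 ⊕ (5/8)I_2, one has d(A) = (5/4, 5/4), d(B) = (1, 1), and d(A) ≺ d(B) fails (since 5/4 + 5/4 ≠ 1 + 1). -/
open Matrix BigOperators

lemma smul_one_diag {ι : Type*} [Fintype ι] [DecidableEq ι] (c : ℝ) :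
    (c : ℝ) • (1 : Matrix ι ι ℝ) = Matrix.diagonal (fun _ => c) := by
  ext i j
  by_cases hij : i = j <;> simp [Matrix.diagonal, Matrix.one_apply, hij]

lemma symp_diag {ι : Type*} [Fintype ι] [DecidableEq ι] (a b : ℝ) (hab : a * b = 1) :
    IsSymplectic (Matrix.fromBlocks ((a:ℝ) • (1 : Matrix ι ι ℝ)) 0 0 ((b:ℝ) • 1)) := by
  unfold IsSymplectic Jm
  simp [Matrix.fromBlocks_transpose, Matrix.fromBlocks_multiply, Matrix.transpose_smul,
    Matrix.smul_mul, Matrix.mul_smul, smul_smul, hab, mul_comm b a]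

lemma conj_diag {ι : Type*} [Fintype ι] [DecidableEq ι] (a b c d : ℝ) :
    (Matrix.fromBlocks ((a:ℝ) • (1 : Matrix ι ι ℝ)) 0 0 ((b:ℝ) • (1 : Matrix ι ι ℝ)))ᵀ *
      (Matrix.fromBlocks ((c:ℝ) • (1 : Matrix ι ι ℝ)) 0 0 ((d:ℝ) • (1 : Matrix ι ι ℝ))) *
      (Matrix.fromBlocks ((a:ℝ) • (1 : Matrix ι ι ℝ)) 0 0 ((b:ℝ) • (1 : Matrix ι ι ℝ))) =
    Matrix.fromBlocks (((a*a*c):ℝ) • (1 : Matrix ι ι ℝ)) 0 0 (((b*b*d):ℝ) • (1 : Matrix ι ι ℝ)) := by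
  simp only [Matrix.fromBlocks_transpose, Matrix.fromBlocks_multiply, Matrix.transpose_smul,
    Matrix.transpose_one, Matrix.transpose_zero, Matrix.smul_mul, Matrix.mul_smul, smul_smul,
    Matrix.mul_zero, Matrix.zero_mul, Matrix.mul_one, Matrix.one_mul, add_zero, zero_add,
    smul_zero]
  ring_nf

lemma pd_diag {ι : Type*} [Fintype ι] [DecidableEq ι] (a b : ℝ) (ha : 0 < a) (hb : 0 < b) :
    (Matrix.fromBlocks ((a:ℝ) • (1 : Matrix ι ι ℝ)) 0 0 ((b:ℝ) • (1 : Matrix ι ι ℝ))).PosDef := by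
  have : (Matrix.fromBlocks ((a:ℝ) • (1 : Matrix ι ι ℝ)) 0 0 ((b:ℝ) • (1 : Matrix ι ι ℝ))) =
      Matrix.diagonal (Sum.elim (fun _ : ι => a) (fun _ : ι => b)) := by
    rw [smul_one_diag a, smul_one_diag b, Matrix.fromBlocks_diagonal]
  rw [this, Matrix.posDef_diagonal_iff]
  rintro (i|i) <;> simpa

lemma one_blocks {ι : Type*} [Fintype ι] [DecidableEq ι] :
    (1 : Matrix (ι ⊕ ι) (ι ⊕ ι) ℝ) = Matrix.fromBlocks ((1:ℝ) • 1) 0 0 ((1:ℝ) • 1) := by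
  rw [one_smul, Matrix.fromBlocks_one]

/-- Explicit example: `A` is a convex combination of symplectic conjugates of `B = I₄`,
but `d(A) = (5/4, 5/4)` is not majorized by `d(B) = (1,1)` since the total sums differ. -/
theorem stmt5 (B A M₁ M₂ : Matrix (Fin 2 ⊕ Fin 2) (Fin 2 ⊕ Fin 2) ℝ)
    (hB : B = 1) (hM₁ : M₁ = 1)
    (hM₂ : M₂ = Matrix.fromBlocks ((2 : ℝ) • 1) 0 0 ((1 / 2 : ℝ) • 1))
    (hA : A = Matrix.fromBlocks ((5 / 2 : ℝ) • 1) 0 0 ((5 / 8 : ℝ) • 1)) :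
    A.PosDef ∧ B.PosDef ∧ IsSymplectic M₁ ∧ IsSymplectic M₂ ∧
    A = (1 / 2 : ℝ) • (M₁ᵀ * B * M₁) + (1 / 2 : ℝ) • (M₂ᵀ * B * M₂) ∧
    IsSympSpectrum A (fun _ => (5 / 4 : ℝ)) ∧
    IsSympSpectrum B (fun _ => (1 : ℝ)) ∧
    ¬ (∑ _j : Fin 2, (5 / 4 : ℝ) = ∑ _j : Fin 2, (1 : ℝ)) := by
  subst hB hM₁ hM₂ hA
  refine ⟨pd_diag _ _ (by norm_num) (by norm_num), ?_, ?_, ?_, ?_, ?_, ?_, by norm_num⟩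
  · rw [one_blocks]; exact pd_diag _ _ one_pos one_pos
  · unfold IsSymplectic; simp
  · exact symp_diag 2 (1/2) (by norm_num)
  · rw [Matrix.mul_one, Matrix.transpose_one, Matrix.one_mul, one_blocks (ι := Fin 2),
      conj_diag, Matrix.fromBlocks_smul, Matrix.fromBlocks_smul,
      Matrix.fromBlocks_add]
    norm_num [smul_smul]
    constructor <;> · rw [← add_smul]; norm_num
  · refine ⟨Matrix.fromBlocks (((Real.sqrt 2)⁻¹ : ℝ) • 1) 0 0 ((Real.sqrt 2 : ℝ) • 1),
      symp_diag _ _ (inv_mul_cancel₀ (by positivity)), ?_⟩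
    have h2 : Real.sqrt 2 * Real.sqrt 2 = 2 := Real.mul_self_sqrt (by norm_num)
    have e1 : (Real.sqrt 2)⁻¹ * (Real.sqrt 2)⁻¹ * (5/2:ℝ) = 5/4 := by
      rw [← mul_inv, h2]; norm_num
    have e2 : Real.sqrt 2 * Real.sqrt 2 * (5/8:ℝ) = 5/4 := by rw [h2]; norm_num
    rw [conj_diag, e1, e2, ← smul_one_diag (ι := Fin 2) (5/4)]
  · refine ⟨1, ?_, ?_⟩
    · unfold IsSymplectic; simp
    · rw [one_blocks (ι := Fin 2), conj_diag, ← smul_one_diag (ι := Fin 2) (1:ℝ)]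
      norm_num
end

section
/- Let A, B be 2n×2n real symmetric positive semidefinite matrices with symplectic kernels. Suppose d(A) = K d(B) for a doubly superstochastic matrix K all of whose entries are strictly positive. Then there exist a probability vector (p(π))_{π ∈ S_n}, symplectic matrices K_π and M, and positive diagonal matrices D_π of the form diag(c_1,...,c_n,c_1,...,c_n), such that A = Σ_π p(π) (K_π D_π M)^T B (K_π D_π M). -/
open Matrix BigOperators

variable {ι : Type*} [Fintype ι] [DecidableEq ι]

lemma Jm_mul_Jm : Jm ι * Jm ι = -1 := by
  simp only [Jm, Matrix.fromBlocks_multiply]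
  ext (i|i) (j|j) <;> simp [Matrix.fromBlocks, Matrix.one_apply]

lemma isUnit_Jm : IsUnit (Jm ι) := by
  refine ⟨⟨Jm ι, -(Jm ι), ?_, ?_⟩, rfl⟩
  · rw [Matrix.mul_neg, Jm_mul_Jm, neg_neg]
  · rw [Matrix.neg_mul, Jm_mul_Jm, neg_neg]

lemma isSymplectic_one : IsSymplectic (1 : Matrix (ι ⊕ ι) (ι ⊕ ι) ℝ) := by
  simp [IsSymplectic]

lemma IsSymplectic.mul {M N : Matrix (ι ⊕ ι) (ι ⊕ ι) ℝ} (hM : IsSymplectic M)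
    (hN : IsSymplectic N) : IsSymplectic (M * N) := by
  unfold IsSymplectic at *
  rw [Matrix.transpose_mul]
  calc Nᵀ * Mᵀ * (Jm ι) * (M * N) = Nᵀ * (Mᵀ * Jm ι * M) * N := by
        simp only [Matrix.mul_assoc]
    _ = Jm ι := by rw [hM, hN]

lemma IsSymplectic.isUnit_det {M : Matrix (ι ⊕ ι) (ι ⊕ ι) ℝ} (hM : IsSymplectic M) :
    IsUnit M.det := by
  have h : Mᵀ.det * ((Jm ι).det * M.det) = (Jm ι).det := by
    rw [← mul_assoc, ← Matrix.det_mul, ← Matrix.det_mul, hM]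
  have hJ : IsUnit (Mᵀ.det * ((Jm ι).det * M.det)) := by
    rw [h]; exact isUnit_Jm.map Matrix.detMonoidHom
  exact isUnit_of_mul_isUnit_right (isUnit_of_mul_isUnit_right hJ)

lemma IsSymplectic.inv {M : Matrix (ι ⊕ ι) (ι ⊕ ι) ℝ} (hM : IsSymplectic M) :
    IsSymplectic M⁻¹ := by
  have hd := hM.isUnit_det
  have hdT : IsUnit Mᵀ.det := by rwa [Matrix.det_transpose]
  unfold IsSymplectic at *
  rw [Matrix.transpose_nonsing_inv]
  calc (Mᵀ)⁻¹ * (Jm ι) * M⁻¹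
      = (Mᵀ)⁻¹ * (Mᵀ * Jm ι * M) * M⁻¹ := by rw [hM]
    _ = ((Mᵀ)⁻¹ * Mᵀ) * (Jm ι) * (M * M⁻¹) := by simp only [Matrix.mul_assoc]
    _ = Jm ι := by
        rw [Matrix.nonsing_inv_mul _ hdT, Matrix.mul_nonsing_inv _ hd, Matrix.one_mul,
          Matrix.mul_one]

section Perm
variable {n : ℕ}

noncomputable def Pm (σ : Equiv.Perm (Fin n)) : Matrix (Fin n) (Fin n) ℝ :=
  σ.toPEquiv.toMatrix

lemma Pm_transpose (σ : Equiv.Perm (Fin n)) : (Pm σ)ᵀ = Pm σ.symm := by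
  rw [Pm, Pm, ← PEquiv.toMatrix_symm, Equiv.toPEquiv_symm]

lemma Pm_conj_diag (σ : Equiv.Perm (Fin n)) (d : Fin n → ℝ) :
    (Pm σ)ᵀ * Matrix.diagonal d * Pm σ = Matrix.diagonal (fun i => d (σ.symm i)) := by
  rw [Pm_transpose, Matrix.mul_assoc, Pm, Pm, PEquiv.mul_toMatrix_toPEquiv,
    PEquiv.toMatrix_toPEquiv_mul, Matrix.submatrix_submatrix]
  ext i j
  by_cases h : i = j
  · subst h; simp
  · have : σ.symm i ≠ σ.symm j := fun hc => h (σ.symm.injective hc)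
    simp [Matrix.diagonal_apply_ne _ h, Matrix.diagonal_apply_ne _ this]

lemma Pm_orth (σ : Equiv.Perm (Fin n)) : (Pm σ)ᵀ * Pm σ = 1 := by
  rw [Pm_transpose, Pm, Pm, PEquiv.toMatrix_toPEquiv_mul]
  ext i j
  simp only [Matrix.submatrix_apply, id_eq, PEquiv.toMatrix_toPEquiv_apply]
  simp [Matrix.one_apply, Equiv.toPEquiv_apply, Equiv.eq_symm_apply, eq_comm, Pi.single_apply]

lemma fromBlocks_conj (Q R : Matrix (Fin n) (Fin n) ℝ) :
    (Matrix.fromBlocks Q 0 0 Q)ᵀ * Matrix.fromBlocks R 0 0 R * Matrix.fromBlocks Q 0 0 Q =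
      Matrix.fromBlocks (Qᵀ * R * Q) 0 0 (Qᵀ * R * Q) := by
  simp [Matrix.fromBlocks_transpose, Matrix.fromBlocks_multiply]

lemma isSymplectic_fromBlocks_of_orth {Q : Matrix (Fin n) (Fin n) ℝ} (h : Qᵀ * Q = 1) :
    IsSymplectic (Matrix.fromBlocks Q 0 0 Q) := by
  unfold IsSymplectic Jm
  simp [Matrix.fromBlocks_transpose, Matrix.fromBlocks_multiply, h]

lemma conj_eq_of_eq {MA A D : Matrix (Fin n ⊕ Fin n) (Fin n ⊕ Fin n) ℝ}
    (hMA : IsSymplectic MA) (hA : MAᵀ * A * MA = D) :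
    A = (MAᵀ)⁻¹ * D * MA⁻¹ := by
  have hd := hMA.isUnit_det
  have hdT : IsUnit MAᵀ.det := by rwa [Matrix.det_transpose]
  rw [← hA]
  calc A = (MAᵀ⁻¹ * MAᵀ) * A * (MA * MA⁻¹) := by
        rw [Matrix.nonsing_inv_mul _ hdT, Matrix.mul_nonsing_inv _ hd, Matrix.one_mul,
          Matrix.mul_one]
    _ = MAᵀ⁻¹ * (MAᵀ * A * MA) * MA⁻¹ := by simp only [Matrix.mul_assoc]

end Perm

lemma sum_smul_push {ι κ M : Type*} [Fintype ι] [Fintype κ] [DecidableEq κ]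
    [AddCommMonoid M] [Module ℝ M] (f : κ → M) (σ : ι → κ) (a : ℝ) :
    ∑ x : κ, (∑ k : ι, if σ k = x then a else 0) • f x = ∑ k : ι, a • f (σ k) := by
  simp_rw [Finset.sum_smul, ite_smul, zero_smul]
  rw [Finset.sum_comm]
  simp [Finset.sum_ite_eq]

lemma sum_fromBlocks_diag {n N : ℕ} (a : ℝ) (g : Fin N → Fin n → ℝ) (h : Fin n → ℝ)
    (hs : ∀ i, ∑ k, a * g k i = h i) :
    ∑ k : Fin N, a • Matrix.fromBlocks (Matrix.diagonal (g k)) 0 0 (Matrix.diagonal (g k))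
      = Matrix.fromBlocks (Matrix.diagonal h) (0 : Matrix (Fin n) (Fin n) ℝ) 0
          (Matrix.diagonal h) := by
  ext (i|i) (j|j) <;>
    simp only [Matrix.sum_apply, Matrix.smul_apply, Matrix.fromBlocks_apply₁₁,
      Matrix.fromBlocks_apply₁₂, Matrix.fromBlocks_apply₂₁, Matrix.fromBlocks_apply₂₂,
      Matrix.zero_apply, smul_eq_mul, mul_zero, Finset.sum_const_zero] <;>
  · by_cases hij : i = j
    · subst hij; simpa [Matrix.diagonal_apply_eq] using hs i
    · simp [Matrix.diagonal_apply_ne _ hij]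


/-- If `d(A) = K d(B)` for a strictly positive doubly superstochastic matrix `K`,
then `A = ∑ p(π) (K_π D_π M)ᵀ B (K_π D_π M)` with `K_π, M` symplectic and
`D_π = diag(c,c)` positive diagonal. -/
theorem stmt6 {n : ℕ} (A B : Matrix (Fin n ⊕ Fin n) (Fin n ⊕ Fin n) ℝ)
    (dA dB : Fin n → ℝ) (K : Matrix (Fin n) (Fin n) ℝ)
    (hAsymm : A.IsSymm) (hApsd : A.PosSemidef) (hAker : HasSymplecticKernel A)
    (hBsymm : B.IsSymm) (hBpsd : B.PosSemidef) (hBker : HasSymplecticKernel B)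
    (hdA : IsSympSpectrum A dA) (hmA : Monotone dA)
    (hdB : IsSympSpectrum B dB) (hmB : Monotone dB)
    (hK : DoublySuperstochastic K) (hKpos : ∀ i j, 0 < K i j)
    (heq : dA = K.mulVec dB) :
    ∃ (p : Equiv.Perm (Fin n) → ℝ)
      (Kp : Equiv.Perm (Fin n) → Matrix (Fin n ⊕ Fin n) (Fin n ⊕ Fin n) ℝ)
      (M : Matrix (Fin n ⊕ Fin n) (Fin n ⊕ Fin n) ℝ)
      (c : Equiv.Perm (Fin n) → Fin n → ℝ),
      (∀ π, 0 ≤ p π) ∧ (∑ π, p π = 1) ∧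
      (∀ π, IsSymplectic (Kp π)) ∧ IsSymplectic M ∧
      (∀ π i, 0 < c π i) ∧
      A = ∑ π, p π •
        ((Kp π * Matrix.fromBlocks (Matrix.diagonal (c π)) 0 0 (Matrix.diagonal (c π)) * M)ᵀ *
          B *
         (Kp π * Matrix.fromBlocks (Matrix.diagonal (c π)) 0 0 (Matrix.diagonal (c π)) * M)) := by
  classical
  obtain ⟨MA, hMAs, hA⟩ := hdA
  obtain ⟨MB, hMBs, hB⟩ := hdB
  -- trivial case n = 0
  rcases eq_or_ne n 0 with hn | hn
  · subst hn
    refine ⟨fun _ => 1, fun _ => 1, 1, fun _ _ => 1, fun _ => zero_le_one, ?_,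
      fun _ => isSymplectic_one, isSymplectic_one, fun _ _ => one_pos, ?_⟩
    · simp
    · apply Subsingleton.elim
  haveI : NeZero n := ⟨hn⟩
  have hnR : (0:ℝ) < n := by exact_mod_cast Nat.pos_of_ne_zero hn
  -- dB is nonnegative
  have hDBpsd : Matrix.PosSemidef
      (Matrix.fromBlocks (Matrix.diagonal dB) 0 0 (Matrix.diagonal dB)) := by
    rw [← hB]
    have := hBpsd.conjTranspose_mul_mul_same MB
    rwa [Matrix.conjTranspose_eq_transpose_of_trivial] at this
  have hdBnn : ∀ j, 0 ≤ dB j := by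
    have hsub := hDBpsd.submatrix Sum.inl
    have hss : (Matrix.fromBlocks (Matrix.diagonal dB) 0 0
        (Matrix.diagonal dB)).submatrix Sum.inl Sum.inl = Matrix.diagonal dB := by
      ext i j; rw [Matrix.submatrix_apply, Matrix.fromBlocks_apply₁₁]
    rw [hss] at hsub
    exact Matrix.posSemidef_diagonal_iff.mp hsub
  have hdAe : ∀ i, dA i = ∑ j, K i j * dB j := by
    intro i; rw [heq]; simp [Matrix.mulVec, dotProduct]
  have hdAnn : ∀ i, 0 ≤ dA i := fun i => by
    rw [hdAe i]
    exact Finset.sum_nonneg fun j _ => mul_nonneg (hKpos i j).le (hdBnn j)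
  set S : Finset (Fin n) := Finset.univ.filter (fun j => 0 < dB j) with hS
  set m : ℕ := S.card with hm
  have hdApos : ∀ i j₀, 0 < dB j₀ → 0 < dA i := by
    intro i j₀ hj₀
    rw [hdAe i]
    exact Finset.sum_pos' (fun j _ => mul_nonneg (hKpos i j).le (hdBnn j))
      ⟨j₀, Finset.mem_univ _, mul_pos (hKpos i j₀) hj₀⟩
  -- the scaling coefficients
  set cc : Fin n → Fin n → ℝ := fun i j =>
    if 0 < dB j then Real.sqrt ((n * dA i) / (m * dB j)) else 1 with hcc
  have hccpos : ∀ i j, 0 < cc i j := by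
    intro i j
    simp only [hcc]
    split_ifs with h
    · have hmpos : (0:ℝ) < m := by
        have : j ∈ S := Finset.mem_filter.mpr ⟨Finset.mem_univ _, h⟩
        exact_mod_cast Finset.card_pos.mpr ⟨j, this⟩
      exact Real.sqrt_pos.mpr (div_pos (mul_pos hnR (hdApos i j h)) (mul_pos hmpos h))
    · exact one_pos
  -- the key scalar identity
  have hscalar : ∀ i, ∑ j, (n:ℝ)⁻¹ * (cc i j * dB j * cc i j) = dA i := by
    intro i
    by_cases hex : ∃ j₀, 0 < dB j₀
    · obtain ⟨j₀, hj₀⟩ := hex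
      have hmpos : (0:ℝ) < m := by
        have : j₀ ∈ S := Finset.mem_filter.mpr ⟨Finset.mem_univ _, hj₀⟩
        exact_mod_cast Finset.card_pos.mpr ⟨j₀, this⟩
      rw [← Finset.sum_filter_add_sum_filter_not Finset.univ (fun j => 0 < dB j)]
      have h2 : ∑ j ∈ Finset.univ.filter (fun j => ¬ 0 < dB j),
          (n:ℝ)⁻¹ * (cc i j * dB j * cc i j) = 0 := by
        refine Finset.sum_eq_zero fun j hj => ?_
        have : dB j = 0 := le_antisymm (not_lt.mp (Finset.mem_filter.mp hj).2) (hdBnn j)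
        simp [this]
      have h1 : ∑ j ∈ Finset.univ.filter (fun j => 0 < dB j),
          (n:ℝ)⁻¹ * (cc i j * dB j * cc i j) = dA i := by
        have hterm : ∀ j ∈ Finset.univ.filter (fun j => 0 < dB j),
            (n:ℝ)⁻¹ * (cc i j * dB j * cc i j) = (n:ℝ)⁻¹ * (n * dA i / m) := by
          intro j hj
          have hj' : 0 < dB j := (Finset.mem_filter.mp hj).2
          have harg : 0 ≤ (n * dA i) / (m * dB j) :=
            div_nonneg (mul_nonneg hnR.le (hdAnn i)) (mul_nonneg hmpos.le hj'.le)
          simp only [hcc, if_pos hj']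
          rw [mul_right_comm, Real.mul_self_sqrt harg]
          congr 1
          field_simp
        rw [Finset.sum_congr rfl hterm, Finset.sum_const]
        have hcard : (Finset.univ.filter (fun j => 0 < dB j)).card = m := rfl
        rw [hcard, nsmul_eq_mul]
        field_simp
      rw [h1, h2, add_zero]
    · push_neg at hex
      have hz : ∀ j, dB j = 0 := fun j => le_antisymm (hex j) (hdBnn j)
      have : dA i = 0 := by rw [hdAe i]; simp [hz]
      rw [this]
      refine Finset.sum_eq_zero fun j _ => by simp [hz j]
  -- the construction
  set σf : Fin n → Equiv.Perm (Fin n) := fun k => Equiv.addRight k with hσf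
  set c : Equiv.Perm (Fin n) → Fin n → ℝ := fun π i => cc i (π.symm i) with hc
  set p : Equiv.Perm (Fin n) → ℝ :=
    fun π => ∑ k : Fin n, if σf k = π then (n:ℝ)⁻¹ else 0 with hp
  set e : Equiv.Perm (Fin n) → Fin n → ℝ :=
    fun π i => c π i * dB (π.symm i) * c π i with he
  set Kp : Equiv.Perm (Fin n) → Matrix (Fin n ⊕ Fin n) (Fin n ⊕ Fin n) ℝ :=
    fun π => MB * Matrix.fromBlocks (Pm π) 0 0 (Pm π) with hKp
  refine ⟨p, Kp, MA⁻¹, c, ?_, ?_, ?_, ?_, ?_, ?_⟩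
  · intro π
    refine Finset.sum_nonneg fun k _ => ?_
    split_ifs
    · positivity
    · exact le_rfl
  · simp only [hp]
    rw [Finset.sum_comm]
    simp only [Finset.sum_ite_eq, Finset.mem_univ, if_pos]
    rw [Finset.sum_const, Finset.card_univ, Fintype.card_fin, nsmul_eq_mul,
      mul_inv_cancel₀ hnR.ne']
  · intro π
    exact hMBs.mul (isSymplectic_fromBlocks_of_orth (Pm_orth π))
  · exact hMAs.inv
  · intro π i; exact hccpos i (π.symm i)
  · -- the main identity
    have key : ∀ π : Equiv.Perm (Fin n),
        (Kp π * Matrix.fromBlocks (Matrix.diagonal (c π)) 0 0 (Matrix.diagonal (c π)) * MA⁻¹)ᵀ *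
          B *
          (Kp π * Matrix.fromBlocks (Matrix.diagonal (c π)) 0 0 (Matrix.diagonal (c π)) * MA⁻¹) =
        (MA⁻¹)ᵀ * Matrix.fromBlocks (Matrix.diagonal (e π)) 0 0 (Matrix.diagonal (e π)) * MA⁻¹ := by
      intro π
      have hQ : (Pm π * Matrix.diagonal (c π))ᵀ * Matrix.diagonal dB *
          (Pm π * Matrix.diagonal (c π)) = Matrix.diagonal (e π) := by
        rw [Matrix.transpose_mul, Matrix.diagonal_transpose]
        calc Matrix.diagonal (c π) * (Pm π)ᵀ * Matrix.diagonal dB *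
              (Pm π * Matrix.diagonal (c π))
            = Matrix.diagonal (c π) * ((Pm π)ᵀ * Matrix.diagonal dB * Pm π) *
              Matrix.diagonal (c π) := by simp only [Matrix.mul_assoc]
          _ = Matrix.diagonal (c π) * Matrix.diagonal (fun i => dB (π.symm i)) *
              Matrix.diagonal (c π) := by rw [Pm_conj_diag]
          _ = Matrix.diagonal (e π) := by
              rw [Matrix.diagonal_mul_diagonal, Matrix.diagonal_mul_diagonal]
      have hNblk : Matrix.fromBlocks (Pm π) 0 0 (Pm π) *
          Matrix.fromBlocks (Matrix.diagonal (c π)) 0 0 (Matrix.diagonal (c π)) =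
          Matrix.fromBlocks (Pm π * Matrix.diagonal (c π)) 0 0
            (Pm π * Matrix.diagonal (c π)) := by
        rw [Matrix.fromBlocks_multiply]
        simp
      set N := Matrix.fromBlocks (Pm π * Matrix.diagonal (c π)) 0 0
        (Pm π * Matrix.diagonal (c π)) with hN
      have hT : Kp π * Matrix.fromBlocks (Matrix.diagonal (c π)) 0 0
          (Matrix.diagonal (c π)) * MA⁻¹ = MB * (N * MA⁻¹) := by
        rw [hKp]
        simp only [Matrix.mul_assoc]
        rw [← Matrix.mul_assoc (Matrix.fromBlocks (Pm π) 0 0 (Pm π)), hNblk]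
      rw [hT, Matrix.transpose_mul]
      calc (N * MA⁻¹)ᵀ * MBᵀ * B * (MB * (N * MA⁻¹))
          = (N * MA⁻¹)ᵀ * (MBᵀ * B * MB) * (N * MA⁻¹) := by
            simp only [Matrix.mul_assoc]
        _ = (MA⁻¹)ᵀ * (Nᵀ * (Matrix.fromBlocks (Matrix.diagonal dB) 0 0
              (Matrix.diagonal dB)) * N) * MA⁻¹ := by
            rw [hB, Matrix.transpose_mul]
            simp only [Matrix.mul_assoc]
        _ = (MA⁻¹)ᵀ * Matrix.fromBlocks (Matrix.diagonal (e π)) 0 0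
              (Matrix.diagonal (e π)) * MA⁻¹ := by
            rw [hN, fromBlocks_conj, hQ, Matrix.mul_assoc]
    have hfinal : ∀ i, ∑ k : Fin n, (n:ℝ)⁻¹ * e (σf k) i = dA i := by
      intro i
      have hsy : ∀ k : Fin n, (σf k).symm i = Equiv.subLeft i k := by
        intro k
        rw [Equiv.symm_apply_eq]
        simp [hσf]
      calc ∑ k : Fin n, (n:ℝ)⁻¹ * e (σf k) i
          = ∑ k : Fin n, (n:ℝ)⁻¹ *
              (cc i (Equiv.subLeft i k) * dB (Equiv.subLeft i k) * cc i (Equiv.subLeft i k)) := by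
            refine Finset.sum_congr rfl fun k _ => ?_
            simp only [he, hc, hsy k]
        _ = ∑ j, (n:ℝ)⁻¹ * (cc i j * dB j * cc i j) :=
            Equiv.sum_comp (Equiv.subLeft i) (fun j => (n:ℝ)⁻¹ * (cc i j * dB j * cc i j))
        _ = dA i := hscalar i
    calc A = (MAᵀ)⁻¹ * Matrix.fromBlocks (Matrix.diagonal dA) 0 0 (Matrix.diagonal dA) * MA⁻¹ :=
          conj_eq_of_eq hMAs hA
      _ = (MA⁻¹)ᵀ * (∑ k : Fin n, (n:ℝ)⁻¹ •
            Matrix.fromBlocks (Matrix.diagonal (e (σf k))) 0 0 (Matrix.diagonal (e (σf k)))) *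
            MA⁻¹ := by
          rw [sum_fromBlocks_diag ((n:ℝ)⁻¹) (fun k => e (σf k)) dA hfinal,
            Matrix.transpose_nonsing_inv]
      _ = ∑ k : Fin n, (n:ℝ)⁻¹ •
            ((MA⁻¹)ᵀ * Matrix.fromBlocks (Matrix.diagonal (e (σf k))) 0 0
              (Matrix.diagonal (e (σf k))) * MA⁻¹) := by
          rw [Matrix.mul_sum, Matrix.sum_mul]
          refine Finset.sum_congr rfl fun k _ => ?_
          rw [Matrix.mul_smul, Matrix.smul_mul]
      _ = ∑ π : Equiv.Perm (Fin n), p π •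
            ((MA⁻¹)ᵀ * Matrix.fromBlocks (Matrix.diagonal (e π)) 0 0
              (Matrix.diagonal (e π)) * MA⁻¹) := by
          simp only [hp]
          exact (sum_smul_push (fun π => (MA⁻¹)ᵀ *
            Matrix.fromBlocks (Matrix.diagonal (e π)) 0 0 (Matrix.diagonal (e π)) * MA⁻¹)
            σf ((n:ℝ)⁻¹)).symm
      _ = _ := by
          refine Finset.sum_congr rfl fun π _ => ?_
          rw [key π]
end

section
/- Every n×n doubly superstochastic matrix K with all entries strictly positive can be written as K = D_1 E D_2 where D_1, D_2 are n×n diagonal matrices with strictly positive diagonal entries and E is doubly stochastic; consequently K = Σ_{π ∈ S_n} p(π) D_1 P_π D_2 for some probability vector (p(π))_π over permutations, where P_π is the permutation matrix of π. -/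
open Matrix BigOperators

/-- Permutation matrix of `π`: the `(i,j)` entry is `δ_{π(i), j}`. -/
def permMat {n : ℕ} (π : Equiv.Perm (Fin n)) : Matrix (Fin n) (Fin n) ℝ :=
  Matrix.of fun i j => if π i = j then 1 else 0


lemma tangent_le_exp (α v : ℝ) (hα : 0 < α) : α * (1 + v - Real.log α) ≤ Real.exp v := by
  have h := Real.add_one_le_exp (v - Real.log α)
  calc α * (1 + v - Real.log α) = α * ((v - Real.log α) + 1) := by ring
    _ ≤ α * Real.exp (v - Real.log α) := by nlinarith
    _ = Real.exp v := by
        rw [Real.exp_sub, Real.exp_log hα]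
        field_simp

lemma min1d (a b c : ℝ)
    (h : ∀ t : ℝ, a + b ≤ a * Real.exp t + b * Real.exp (-t) + c * t) :
    a - b + c = 0 := by
  set f : ℝ → ℝ := fun t => a * Real.exp t + b * Real.exp (-t) + c * t with hf
  have h2 : HasDerivAt (fun t : ℝ => Real.exp (-t)) (-1) 0 := by
    have := (Real.hasDerivAt_exp (-0)).comp 0 (hasDerivAt_neg 0)
    simp only [neg_zero, Real.exp_zero, one_mul] at this
    exact this
  have hd : HasDerivAt f (a - b + c) 0 := by
    have h1 : HasDerivAt (fun t : ℝ => Real.exp t) 1 0 := by simpa using Real.hasDerivAt_exp 0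
    have hc : HasDerivAt (fun t : ℝ => c * t) c 0 := by
      simpa using (hasDerivAt_id (0:ℝ)).const_mul c
    have := ((h1.const_mul a).add (h2.const_mul b)).add hc
    exact this.congr_deriv (by ring)
  have hmin : IsLocalMin f 0 := Filter.Eventually.of_forall fun t => by
    simpa [f] using h t
  exact hmin.hasDerivAt_eq_zero hd

lemma permMat_eq (n : ℕ) (π : Equiv.Perm (Fin n)) :
    (Matrix.of fun i j => if π i = j then (1:ℝ) else 0) = π.permMatrix ℝ := by
  ext i j
  simp [Equiv.Perm.permMatrix, PEquiv.toMatrix, Equiv.toPEquiv_apply, Option.mem_def, eq_comm]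


noncomputable def phi {n : ℕ} (K : Matrix (Fin n) (Fin n) ℝ) (p : (Fin n → ℝ) × (Fin n → ℝ)) : ℝ :=
  (∑ i, ∑ j, K i j * Real.exp (p.1 i + p.2 j)) - (∑ i, p.1 i) - (∑ j, p.2 j)

lemma phi_cont {n : ℕ} (K : Matrix (Fin n) (Fin n) ℝ) : Continuous (phi K) := by
  unfold phi
  refine ((continuous_finset_sum _ fun i _ => continuous_finset_sum _ fun j _ => ?_).sub
    (continuous_finset_sum _ fun i _ => (continuous_apply i).comp continuous_fst)).sub
    (continuous_finset_sum _ fun j _ => (continuous_apply j).comp continuous_snd)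
  exact continuous_const.mul (Real.continuous_exp.comp
    (((continuous_apply i).comp continuous_fst).add ((continuous_apply j).comp continuous_snd)))

set_option maxHeartbeats 1000000 in
lemma exists_min {n : ℕ} (hn : 0 < n) (K : Matrix (Fin n) (Fin n) ℝ) (hpos : ∀ i j, 0 < K i j) :
    ∃ x : (Fin n → ℝ) × (Fin n → ℝ), (∑ i, x.1 i = 0) ∧
      ∀ y : (Fin n → ℝ) × (Fin n → ℝ), (∑ i, y.1 i = 0) → phi K x ≤ phi K y := by
  classical
  have hne : Nonempty (Fin n) := ⟨⟨0, hn⟩⟩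
  -- the minimal entry
  obtain ⟨⟨i₁, j₁⟩, -, hmle⟩ := Finset.exists_min_image (Finset.univ ×ˢ Finset.univ)
    (fun p : Fin n × Fin n => K p.1 p.2) (by simp [Finset.univ_nonempty])
  set m : ℝ := K i₁ j₁ with hmdef
  have hm : 0 < m := hpos _ _
  have hmK : ∀ i j, m ≤ K i j := fun i j => hmle (i, j) (by simp)
  -- constants
  set B : ℝ := phi K 0 with hB
  have hBval : B = ∑ i, ∑ j, K i j := by simp [hB, phi]
  set L : ℝ := 1 + Real.log m with hL
  set C0 : ℝ := 2 - 2 * Real.log (2 / m) with hC0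
  set B1 : ℝ := B - (n - 1) * L with hB1
  set Rv : ℝ := |B1| + |C0| with hRv
  have hRv0 : 0 ≤ Rv := by positivity
  have hQpos : 0 < (B + n * Rv) / (m * Real.exp (-Rv)) := by
    have hB0 : 0 < B := by
      rw [hBval]
      exact Finset.sum_pos (fun i _ => Finset.sum_pos (fun j _ => hpos i j) (by simp [Finset.univ_nonempty])) (by simp [Finset.univ_nonempty])
    positivity
  set Q : ℝ := (B + n * Rv) / (m * Real.exp (-Rv)) with hQ
  set U : ℝ := max (Real.log Q) 0 with hU
  have hU0 : 0 ≤ U := le_max_right _ _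
  set Ru : ℝ := (n + 1) * U with hRu
  set R : ℝ := max Rv Ru with hR
  -- pointwise exp bounds
  have glb : ∀ x : ℝ, L ≤ m * Real.exp x - x := by
    intro x
    have := tangent_le_exp (1/m) x (by positivity)
    rw [Real.log_div one_ne_zero hm.ne', Real.log_one] at this
    have h2 : (1/m) * (1 + x - (0 - Real.log m)) * m ≤ Real.exp x * m :=
      mul_le_mul_of_nonneg_right this hm.le
    rw [hL]
    field_simp at h2
    nlinarith
  have gub : ∀ x : ℝ, x + C0 ≤ m * Real.exp x - x := by
    intro x
    have := tangent_le_exp (2/m) x (by positivity)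
    have h2 : (2/m) * (1 + x - Real.log (2/m)) * m ≤ Real.exp x * m :=
      mul_le_mul_of_nonneg_right this hm.le
    rw [hC0]
    field_simp at h2
    nlinarith
  -- the compact set
  set s : Set ((Fin n → ℝ) × (Fin n → ℝ)) :=
    {p | ∑ i, p.1 i = 0} ∩ {p | phi K p ≤ B} with hs
  have hs_closed : IsClosed s := by
    refine IsClosed.inter ?_ (isClosed_le (phi_cont K) continuous_const)
    exact isClosed_eq (continuous_finset_sum _ fun i _ => (continuous_apply i).comp continuous_fst)
      continuous_const
  -- s is contained in a box
  have hsub : s ⊆ (Set.univ.pi fun _ : Fin n => Set.Icc (-R) R) ×ˢ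
      (Set.univ.pi fun _ : Fin n => Set.Icc (-R) R) := by
    intro p hp
    obtain ⟨husum, hφB⟩ := hp
    simp only [Set.mem_setOf_eq] at husum hφB
    set u := p.1 with hu_def
    set v := p.2 with hv_def
    -- some u i₀ is nonnegative
    have hex : ∃ i₀, 0 ≤ u i₀ := by
      by_contra h
      push_neg at h
      have : ∑ i, u i < 0 := Finset.sum_neg (fun i _ => h i) (by simp [Finset.univ_nonempty])
      linarith [husum ▸ this]
    obtain ⟨i₀, hi₀⟩ := hex
    -- phi lower bound via row i₀ : sum of g j ≤ B
    have hrow : ∑ j, (m * Real.exp (v j) - v j) ≤ B := by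
      have h1 : ∑ j, m * Real.exp (v j) ≤ ∑ j, K i₀ j * Real.exp (u i₀ + v j) := by
        refine Finset.sum_le_sum fun j _ => ?_
        have h3 : Real.exp (v j) ≤ Real.exp (u i₀ + v j) := by
          apply Real.exp_le_exp.2; linarith
        nlinarith [(Real.exp_pos (v j)).le, hmK i₀ j]
      have h2 : ∑ j, K i₀ j * Real.exp (u i₀ + v j) ≤
          ∑ i, ∑ j, K i j * Real.exp (u i + v j) := by
        refine Finset.single_le_sum (f := fun i => ∑ j, K i j * Real.exp (u i + v j))
          (fun i _ => Finset.sum_nonneg fun j _ =>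
            mul_nonneg (hpos _ _).le (Real.exp_pos _).le) (Finset.mem_univ i₀)
      have hphi := hφB
      unfold phi at hphi
      rw [husum] at hphi
      rw [Finset.sum_sub_distrib]
      linarith
    -- each g j bounded: g j ≤ B1
    have hgj : ∀ j, m * Real.exp (v j) - v j ≤ B1 := by
      intro j
      have h1 : ∑ k ∈ Finset.univ.erase j, (m * Real.exp (v k) - v k) ≥
          (Finset.univ.erase j).card • L :=
        Finset.card_nsmul_le_sum _ _ _ fun k _ => glb (v k)
      have hcard : ((Finset.univ.erase j).card : ℝ) = (n : ℝ) - 1 := by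
        rw [Finset.card_erase_of_mem (Finset.mem_univ j)]
        simp [Nat.cast_sub hn]
      have h2 : (m * Real.exp (v j) - v j) + ∑ k ∈ Finset.univ.erase j, (m * Real.exp (v k) - v k)
          = ∑ k, (m * Real.exp (v k) - v k) :=
        Finset.add_sum_erase Finset.univ (fun k => m * Real.exp (v k) - v k) (Finset.mem_univ j)
      rw [hB1]
      rw [nsmul_eq_mul, hcard] at h1
      nlinarith
    -- bounds on v
    have hv : ∀ j, -Rv ≤ v j ∧ v j ≤ Rv := by
      intro j
      have h1 := hgj j
      have h2 : -v j ≤ B1 := by nlinarith [mul_pos hm (Real.exp_pos (v j))]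
      have h3 : v j + C0 ≤ B1 := le_trans (by nlinarith [gub (v j)]) h1
      constructor
      · rw [hRv]
        have := le_abs_self B1
        have := abs_nonneg C0
        linarith
      · rw [hRv]
        have := le_abs_self B1
        have := neg_abs_le C0
        linarith
    -- bound on sum exp u
    have hsumexp : ∑ i, Real.exp (u i) ≤ Q := by
      have j₀ : Fin n := Classical.arbitrary _
      have h1 : ∑ i, m * Real.exp (-Rv) * Real.exp (u i) ≤
          ∑ i, K i j₀ * Real.exp (u i + v j₀) := by
        refine Finset.sum_le_sum fun i _ => ?_
        have hvlb : -Rv ≤ v j₀ := (hv j₀).1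
        have : Real.exp (-Rv) * Real.exp (u i) ≤ Real.exp (u i + v j₀) := by
          rw [← Real.exp_add]
          apply Real.exp_le_exp.2; linarith
        nlinarith [hmK i j₀, hm.le, Real.exp_pos (u i), Real.exp_pos (-Rv), mul_pos (Real.exp_pos (-Rv)) (Real.exp_pos (u i))]
      have h2 : ∑ i, K i j₀ * Real.exp (u i + v j₀) ≤ ∑ j, ∑ i, K i j * Real.exp (u i + v j) := by
        refine Finset.single_le_sum (f := fun j => ∑ i, K i j * Real.exp (u i + v j))
          (fun j _ => Finset.sum_nonneg fun i _ =>
            mul_nonneg (hpos _ _).le (Real.exp_pos _).le) (Finset.mem_univ j₀)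
      have h3 : ∑ j, ∑ i, K i j * Real.exp (u i + v j) = ∑ i, ∑ j, K i j * Real.exp (u i + v j) :=
        Finset.sum_comm
      have h4 : ∑ j, v j ≤ n * Rv := by
        calc ∑ j, v j ≤ ∑ _j : Fin n, Rv := Finset.sum_le_sum fun j _ => by
              exact (hv j).2
          _ = n * Rv := by simp [mul_comm]
      have hphi := hφB
      unfold phi at hphi
      rw [husum] at hphi
      have h5 : ∑ i, ∑ j, K i j * Real.exp (u i + v j) ≤ B + n * Rv := by linarith
      have h6 : m * Real.exp (-Rv) * ∑ i, Real.exp (u i) ≤ B + n * Rv := by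
        rw [Finset.mul_sum]
        calc ∑ i, m * Real.exp (-Rv) * Real.exp (u i) ≤ _ := h1
          _ ≤ _ := le_trans h2 (le_of_eq h3)
          _ ≤ B + n * Rv := h5
      rw [hQ, le_div_iff₀ (by positivity)]
      linarith
    -- bounds on u
    have hu : ∀ i, -R ≤ u i ∧ u i ≤ R := by
      intro i
      have hui : u i ≤ U := by
        have h1 : Real.exp (u i) ≤ Q :=
          le_trans (Finset.single_le_sum (f := fun i => Real.exp (u i))
            (fun i _ => (Real.exp_pos _).le) (Finset.mem_univ i)) hsumexp
        have : u i ≤ Real.log Q := (Real.le_log_iff_exp_le hQpos).2 h1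
        exact le_trans this (le_max_left _ _)
      constructor
      · -- u i = - sum over erase
        have h2 : u i + ∑ k ∈ Finset.univ.erase i, u k = ∑ k, u k :=
          Finset.add_sum_erase Finset.univ u (Finset.mem_univ i)
        rw [husum] at h2
        have h3 : ∑ k ∈ Finset.univ.erase i, u k ≤ (Finset.univ.erase i).card • U :=
          Finset.sum_le_card_nsmul _ _ _ fun k _ => by
            have : u k ≤ U := by
              have h1 : Real.exp (u k) ≤ Q :=
                le_trans (Finset.single_le_sum (f := fun i => Real.exp (u i))
                  (fun i _ => (Real.exp_pos _).le) (Finset.mem_univ k)) hsumexp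
              exact le_trans ((Real.le_log_iff_exp_le hQpos).2 h1) (le_max_left _ _)
            exact this
        have hcard : ((Finset.univ.erase i).card : ℝ) ≤ n := by
          rw [Finset.card_erase_of_mem (Finset.mem_univ i)]
          simp
        rw [nsmul_eq_mul] at h3
        have h4 : u i = -∑ k ∈ Finset.univ.erase i, u k := by linarith
        have h5 : u i ≥ -(n * U) := by
          rw [h4]
          have : ∑ k ∈ Finset.univ.erase i, u k ≤ n * U := by
            calc ∑ k ∈ Finset.univ.erase i, u k ≤ _ := h3
              _ ≤ n * U := by nlinarith
          linarith
        have hRuR : Ru ≤ R := le_max_right _ _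
        have : n * U ≤ Ru := by rw [hRu]; nlinarith
        linarith
      · have hRuR : Ru ≤ R := le_max_right _ _
        have hn' : (0:ℝ) ≤ n := Nat.cast_nonneg n
        have : U ≤ Ru := by rw [hRu]; nlinarith
        linarith
    refine Set.mem_prod.2 ⟨Set.mem_univ_pi.2 fun i => ⟨(hu i).1, (hu i).2⟩,
      Set.mem_univ_pi.2 fun j => ?_⟩
    have hRvR : Rv ≤ R := le_max_left _ _
    exact ⟨by linarith [(hv j).1], by linarith [(hv j).2]⟩
  -- compactness
  have hbox : IsCompact ((Set.univ.pi fun _ : Fin n => Set.Icc (-R) R) ×ˢ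
      (Set.univ.pi fun _ : Fin n => Set.Icc (-R) R)) :=
    (isCompact_univ_pi fun _ => isCompact_Icc).prod (isCompact_univ_pi fun _ => isCompact_Icc)
  have hscompact : IsCompact s := hbox.of_isClosed_subset hs_closed hsub
  have h0s : (0 : (Fin n → ℝ) × (Fin n → ℝ)) ∈ s := ⟨by simp, le_refl B⟩
  obtain ⟨x, hxs, hxmin⟩ := hscompact.exists_isMinOn ⟨0, h0s⟩ (phi_cont K).continuousOn
  refine ⟨x, hxs.1, fun y hy => ?_⟩
  by_cases hyB : phi K y ≤ B
  · exact hxmin ⟨hy, hyB⟩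
  · exact le_trans (hxmin h0s) (by linarith [not_le.1 hyB])



lemma sinkhorn {n : ℕ} (hn : 0 < n) (K : Matrix (Fin n) (Fin n) ℝ) (hpos : ∀ i j, 0 < K i j) :
    ∃ u v : Fin n → ℝ, (∀ i, ∑ j, K i j * Real.exp (u i + v j) = 1) ∧
      (∀ j, ∑ i, K i j * Real.exp (u i + v j) = 1) := by
  classical
  obtain ⟨x, hx0, hxmin⟩ := exists_min hn K hpos
  obtain ⟨u, v⟩ := x
  simp only at hx0 hxmin ⊢
  have hcol : ∀ j₀, ∑ i, K i j₀ * Real.exp (u i + v j₀) = 1 := by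
    intro j₀
    set a := ∑ i, K i j₀ * Real.exp (u i + v j₀) with ha
    have key : ∀ t : ℝ, a + 0 ≤ a * Real.exp t + 0 * Real.exp (-t) + (-1) * t := by
      intro t
      set v' : Fin n → ℝ := fun j => v j + (if j = j₀ then t else 0) with hv'
      have hy := hxmin (u, v') hx0
      have hterm : ∀ i, ∑ j, K i j * Real.exp (u i + v' j) =
          (∑ j, K i j * Real.exp (u i + v j)) +
          (Real.exp t - 1) * (K i j₀ * Real.exp (u i + v j₀)) := by
        intro i
        have h1 : ∀ j, K i j * Real.exp (u i + v' j) = K i j * Real.exp (u i + v j) +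
            (if j = j₀ then (Real.exp t - 1) * (K i j * Real.exp (u i + v j)) else 0) := by
          intro j
          by_cases h : j = j₀
          · subst h
            rw [if_pos rfl]
            have hvj : v' j = v j + t := by simp [hv']
            rw [hvj, show u i + (v j + t) = (u i + v j) + t from by ring, Real.exp_add]
            ring
          · simp [hv', h]
        rw [Finset.sum_congr rfl fun j _ => h1 j, Finset.sum_add_distrib,
          Finset.sum_ite_eq' Finset.univ j₀]
        simp
      have hsumv' : ∑ j, v' j = (∑ j, v j) + t := by
        simp only [hv']
        rw [Finset.sum_add_distrib, Finset.sum_ite_eq' Finset.univ j₀ (fun _ => t)]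
        simp
      have hexp : phi K (u, v') =
          (∑ i, ∑ j, K i j * Real.exp (u i + v j)) + (Real.exp t - 1) * a
            - (∑ i, u i) - ((∑ j, v j) + t) := by
        show (∑ i, ∑ j, K i j * Real.exp (u i + v' j)) - (∑ i, u i) - (∑ j, v' j) = _
        rw [Finset.sum_congr rfl fun i _ => hterm i, Finset.sum_add_distrib, ← Finset.mul_sum,
          hsumv']
      have hxval : phi K (u, v) =
          (∑ i, ∑ j, K i j * Real.exp (u i + v j)) - (∑ i, u i) - (∑ j, v j) := rfl
      rw [hxval, hexp] at hy
      nlinarith [hy]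
    have := min1d a 0 (-1) key
    linarith
  refine ⟨u, v, ?_, fun j => hcol j⟩
  -- row sums: first all equal
  have hreq : ∀ i₀ k₀ : Fin n, ∑ j, K i₀ j * Real.exp (u i₀ + v j) =
        ∑ j, K k₀ j * Real.exp (u k₀ + v j) := by
      intro i₀ k₀
      by_cases hik : i₀ = k₀
      · rw [hik]
      set a := ∑ j, K i₀ j * Real.exp (u i₀ + v j) with ha
      set b := ∑ j, K k₀ j * Real.exp (u k₀ + v j) with hb
      have key : ∀ t : ℝ, a + b ≤ a * Real.exp t + b * Real.exp (-t) + 0 * t := by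
        intro t
        set u' : Fin n → ℝ := fun i =>
          u i + (if i = i₀ then t else 0) - (if i = k₀ then t else 0) with hu'
        have hsum' : ∑ i, u' i = 0 := by
          simp only [hu']
          rw [Finset.sum_sub_distrib, Finset.sum_add_distrib,
            Finset.sum_ite_eq' Finset.univ i₀ (fun _ => t),
            Finset.sum_ite_eq' Finset.univ k₀ (fun _ => t)]
          simp [hx0]
        have hy := hxmin (u', v) hsum'
        have hterm : ∀ i, ∑ j, K i j * Real.exp (u' i + v j) =
            (∑ j, K i j * Real.exp (u i + v j)) +
            (if i = i₀ then (Real.exp t - 1) * ∑ j, K i j * Real.exp (u i + v j) else 0) +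
            (if i = k₀ then (Real.exp (-t) - 1) * ∑ j, K i j * Real.exp (u i + v j) else 0) := by
          intro i
          by_cases h1 : i = i₀
          · subst h1
            have : ∀ j, K i j * Real.exp (u' i + v j) =
                Real.exp t * (K i j * Real.exp (u i + v j)) := by
              intro j
              have : u' i = u i + t := by simp [hu', hik]
              rw [this, show u i + t + v j = (u i + v j) + t by ring, Real.exp_add]
              ring
            rw [Finset.sum_congr rfl fun j _ => this j, ← Finset.mul_sum]
            simp [hik]
            ring
          · by_cases h2 : i = k₀
            · subst h2
              have : ∀ j, K i j * Real.exp (u' i + v j) =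
                  Real.exp (-t) * (K i j * Real.exp (u i + v j)) := by
                intro j
                have : u' i = u i - t := by simp [hu', h1]
                rw [this, show u i - t + v j = (u i + v j) + (-t) by ring, Real.exp_add]
                ring
              rw [Finset.sum_congr rfl fun j _ => this j, ← Finset.mul_sum]
              simp [h1]
              ring
            · have : ∀ j, K i j * Real.exp (u' i + v j) = K i j * Real.exp (u i + v j) := by
                intro j
                have : u' i = u i := by simp [hu', h1, h2]
                rw [this]
              rw [Finset.sum_congr rfl fun j _ => this j]
              simp [h1, h2]
        have hexp : phi K (u', v) =
            (∑ i, ∑ j, K i j * Real.exp (u i + v j)) + (Real.exp t - 1) * a +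
              (Real.exp (-t) - 1) * b - (∑ i, u i) - (∑ j, v j) := by
          show (∑ i, ∑ j, K i j * Real.exp (u' i + v j)) - (∑ i, u' i) - (∑ j, v j) = _
          rw [Finset.sum_congr rfl fun i _ => hterm i, hsum', hx0]
          rw [Finset.sum_add_distrib, Finset.sum_add_distrib,
            Finset.sum_ite_eq' Finset.univ i₀, Finset.sum_ite_eq' Finset.univ k₀]
          simp [ha, hb]
        have hxval : phi K (u, v) =
            (∑ i, ∑ j, K i j * Real.exp (u i + v j)) - (∑ i, u i) - (∑ j, v j) := rfl
        rw [hxval, hexp] at hy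
        nlinarith [hy]
      have := min1d a b 0 key
      linarith
  -- total sum is n
  have htot : ∑ i, ∑ j, K i j * Real.exp (u i + v j) = n := by
    rw [Finset.sum_comm]
    simp [hcol]
  intro i
  have hn' : (n : ℝ) ≠ 0 := Nat.cast_ne_zero.2 hn.ne'
  have h1 : ∑ k, ∑ j, K k j * Real.exp (u k + v j)
      = n * (∑ j, K i j * Real.exp (u i + v j)) := by
    rw [Finset.sum_congr rfl fun k _ => hreq k i]
    simp [Finset.card_univ, mul_comm]
  rw [htot] at h1
  field_simp at h1
  linarith



lemma permMat_eq2 {n : ℕ} (π : Equiv.Perm (Fin n)) : permMat π = π.permMatrix ℝ := by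
  ext i j
  simp [permMat, Equiv.Perm.permMatrix, PEquiv.toMatrix, Equiv.toPEquiv_apply, Option.mem_def,
    eq_comm]

/-- Sinkhorn decomposition of a strictly positive doubly superstochastic matrix,
and its Birkhoff expansion. -/
theorem stmt7 {n : ℕ} (K : Matrix (Fin n) (Fin n) ℝ)
    (hK : DoublySuperstochastic K) (hpos : ∀ i j, 0 < K i j) :
    ∃ (d₁ d₂ : Fin n → ℝ) (E : Matrix (Fin n) (Fin n) ℝ),
      (∀ i, 0 < d₁ i) ∧ (∀ i, 0 < d₂ i) ∧ DoublyStochastic E ∧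
      K = Matrix.diagonal d₁ * E * Matrix.diagonal d₂ ∧
      ∃ p : Equiv.Perm (Fin n) → ℝ, (∀ π, 0 ≤ p π) ∧ (∑ π, p π = 1) ∧
        K = ∑ π, p π • (Matrix.diagonal d₁ * permMat π * Matrix.diagonal d₂) := by
  classical
  rcases Nat.eq_zero_or_pos n with hn | hn
  · subst hn
    refine ⟨fun _ => 1, fun _ => 1, 1, fun i => one_pos, fun i => one_pos,
      ⟨fun i => i.elim0, fun i => i.elim0, fun j => j.elim0⟩, Subsingleton.elim _ _,
      fun _ => 1, fun _ => zero_le_one, by simp, Subsingleton.elim _ _⟩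
  obtain ⟨u, v, hrow, hcol⟩ := sinkhorn hn K hpos
  set d₁ : Fin n → ℝ := fun i => Real.exp (-u i) with hd₁
  set d₂ : Fin n → ℝ := fun j => Real.exp (-v j) with hd₂
  set E : Matrix (Fin n) (Fin n) ℝ := Matrix.of fun i j => K i j * Real.exp (u i + v j) with hE
  have hEapp : ∀ i j, E i j = K i j * Real.exp (u i + v j) := fun i j => rfl
  have hDS : DoublyStochastic E :=
    ⟨fun i j => mul_nonneg (hpos i j).le (Real.exp_pos _).le, hrow, hcol⟩
  have hfact : K = Matrix.diagonal d₁ * E * Matrix.diagonal d₂ := by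
    ext i j
    rw [Matrix.mul_diagonal, Matrix.diagonal_mul, hEapp]
    have hprod : Real.exp (-u i) * Real.exp (u i + v j) * Real.exp (-v j) = 1 := by
      rw [← Real.exp_add, ← Real.exp_add]
      simp
    simp only [hd₁, hd₂]
    linear_combination (-(K i j)) * hprod
  refine ⟨d₁, d₂, E, fun i => Real.exp_pos _, fun j => Real.exp_pos _, hDS, hfact, ?_⟩
  have hmem : E ∈ doublyStochastic ℝ (Fin n) :=
    mem_doublyStochastic_iff_sum.2 ⟨hDS.1, hDS.2.1, hDS.2.2⟩
  obtain ⟨w, hw0, hw1, hw2⟩ := exists_eq_sum_perm_of_mem_doublyStochastic hmem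
  refine ⟨w, hw0, hw1, ?_⟩
  rw [hfact, ← hw2, Finset.mul_sum, Finset.sum_mul]
  exact Finset.sum_congr rfl fun σ _ => by
    rw [permMat_eq2, Matrix.mul_smul, Matrix.smul_mul]
end

section
/- Let A be a 2n×2n real symmetric positive definite matrix commuting with J (i.e., AJ = JA), and let Δ_c(A) be the n-vector with i-th entry ((A_{11})_{ii} + (A_{22})_{ii})/2, where A = [[A_{11}, A_{12}], [A_{12}^T, A_{22}]] in n×n blocks. Then every 2n×2n positive definite matrix B whose symplectic spectrum equals Δ_c(A) sorted increasingly lies in the convex hull of the symplectic orbit of A. In particular diag(Δ_c(A)) ⊕ diag(Δ_c(A)) lies in the convex hull of the symplectic orbit of A. -/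
open Matrix BigOperators

/-- The vector `Δ_c(A)` of averaged diagonal entries. -/
noncomputable def Deltac {n : ℕ} (A : Matrix (Fin n ⊕ Fin n) (Fin n ⊕ Fin n) ℝ) : Fin n → ℝ :=
  fun i => (A (Sum.inl i) (Sum.inl i) + A (Sum.inr i) (Sum.inr i)) / 2


namespace SympHullAux

open Complex Equiv

variable {n : ℕ}

lemma fromBlocks_congr {α : Type*} {a a' b b' c c' d d' : Matrix (Fin n) (Fin n) α}
    (h1 : a = a') (h2 : b = b') (h3 : c = c') (h4 : d = d') :
    Matrix.fromBlocks a b c d = Matrix.fromBlocks a' b' c' d' := by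
  rw [h1, h2, h3, h4]

/-- Realification `P - iQ ↦ [[P, Q], [-Q, P]]`, i.e. `[[re, -im], [im, re]]`. -/
noncomputable def rl (M : Matrix (Fin n) (Fin n) ℂ) :
    Matrix (Fin n ⊕ Fin n) (Fin n ⊕ Fin n) ℝ :=
  Matrix.fromBlocks (M.map Complex.re) (-(M.map Complex.im))
    (M.map Complex.im) (M.map Complex.re)

lemma map_re_mul (M N : Matrix (Fin n) (Fin n) ℂ) :
    (M * N).map Complex.re = M.map Complex.re * N.map Complex.re
      - M.map Complex.im * N.map Complex.im := by
  ext i j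
  simp [Matrix.mul_apply, Complex.mul_re, Finset.sum_sub_distrib]

lemma map_im_mul (M N : Matrix (Fin n) (Fin n) ℂ) :
    (M * N).map Complex.im = M.map Complex.re * N.map Complex.im
      + M.map Complex.im * N.map Complex.re := by
  ext i j
  simp [Matrix.mul_apply, Complex.mul_im, Finset.sum_add_distrib]

lemma rl_mul (M N : Matrix (Fin n) (Fin n) ℂ) : rl (M * N) = rl M * rl N := by
  rw [rl, rl, rl, Matrix.fromBlocks_multiply, map_re_mul, map_im_mul]
  refine fromBlocks_congr ?_ ?_ ?_ ?_ <;>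
    · try simp only [Matrix.neg_mul, Matrix.mul_neg, neg_neg, neg_add, sub_eq_add_neg]
      try abel

lemma rl_star (M : Matrix (Fin n) (Fin n) ℂ) : rl Mᴴ = (rl M)ᵀ := by
  rw [rl, rl, Matrix.fromBlocks_transpose]
  exact fromBlocks_congr (by ext i j; simp [Matrix.conjTranspose_apply])
    (by ext i j; simp [Matrix.conjTranspose_apply])
    (by ext i j; simp [Matrix.conjTranspose_apply])
    (by ext i j; simp [Matrix.conjTranspose_apply])

lemma rl_diagonal (d : Fin n → ℝ) :
    rl (Matrix.diagonal (fun i => (d i : ℂ))) =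
      Matrix.fromBlocks (Matrix.diagonal d) 0 0 (Matrix.diagonal d) := by
  rw [rl]
  refine fromBlocks_congr ?_ ?_ ?_ ?_ <;> ext i j <;>
    simp [Matrix.diagonal_apply, apply_ite Complex.re, apply_ite Complex.im]

lemma rl_J : rl (Matrix.diagonal (fun _ : Fin n => -Complex.I)) = Jm (Fin n) := by
  rw [rl, Jm]
  refine fromBlocks_congr ?_ ?_ ?_ ?_ <;> ext i j <;> by_cases h : i = j <;>
    simp [Matrix.diagonal_apply, Matrix.one_apply, h]

lemma rl_symplectic (U : Matrix (Fin n) (Fin n) ℂ) (hU : Uᴴ * U = 1) :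
    IsSymplectic (rl U) := by
  unfold IsSymplectic
  rw [← rl_star, ← rl_J, ← rl_mul, ← rl_mul]
  have h : Matrix.diagonal (fun _ : Fin n => -Complex.I) = (-Complex.I) • 1 := by
    ext i j; simp [Matrix.diagonal_apply, Matrix.one_apply, apply_ite]
  rw [h, Matrix.mul_smul, Matrix.smul_mul, Matrix.mul_one, hU]

lemma J_mul_J' : Jm (Fin n) * Matrix.fromBlocks 0 (-1) 1 0 = 1 := by
  rw [Jm, Matrix.fromBlocks_multiply]
  simp [← Matrix.fromBlocks_one]

lemma isUnit_of_symplectic {N : Matrix (Fin n ⊕ Fin n) (Fin n ⊕ Fin n) ℝ}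
    (hN : IsSymplectic N) : IsUnit N.det := by
  have hJ : IsUnit (Jm (Fin n)).det := by
    apply Matrix.isUnit_det_of_right_inverse (B := Matrix.fromBlocks 0 (-1) 1 0)
    exact J_mul_J'
  have h0 : (Jm (Fin n)).det ≠ 0 := hJ.ne_zero
  have this := congrArg Matrix.det hN
  rw [Matrix.det_mul, Matrix.det_mul, Matrix.det_transpose] at this
  have hd : N.det * N.det = 1 := by
    apply mul_left_cancel₀ h0
    rw [mul_one]
    linear_combination this
  exact IsUnit.of_mul_eq_one _ hd

lemma symplectic_mul {M N : Matrix (Fin n ⊕ Fin n) (Fin n ⊕ Fin n) ℝ}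
    (hM : IsSymplectic M) (hN : IsSymplectic N) : IsSymplectic (M * N) := by
  unfold IsSymplectic at *
  rw [Matrix.transpose_mul]
  calc Nᵀ * Mᵀ * Jm (Fin n) * (M * N) = Nᵀ * (Mᵀ * Jm (Fin n) * M) * N := by
        noncomm_ring
    _ = Jm (Fin n) := by rw [hM, hN]

lemma symplectic_inv {N : Matrix (Fin n ⊕ Fin n) (Fin n ⊕ Fin n) ℝ}
    (hN : IsSymplectic N) : IsSymplectic N⁻¹ := by
  have hu := isUnit_of_symplectic hN
  have h1 : N * N⁻¹ = 1 := Matrix.mul_nonsing_inv N hu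
  have h2 : N⁻¹ * N = 1 := Matrix.nonsing_inv_mul N hu
  unfold IsSymplectic at *
  calc (N⁻¹)ᵀ * Jm (Fin n) * N⁻¹ = (N⁻¹)ᵀ * (Nᵀ * Jm (Fin n) * N) * N⁻¹ := by rw [hN]
    _ = (N * N⁻¹)ᵀ * Jm (Fin n) * (N * N⁻¹) := by rw [Matrix.transpose_mul]; noncomm_ring
    _ = Jm (Fin n) := by rw [h1]; simp

lemma hull_conj {A X M : Matrix (Fin n ⊕ Fin n) (Fin n ⊕ Fin n) ℝ}
    (hX : InSympHull A X) (hM : IsSymplectic M) : InSympHull A (Mᵀ * X * M) := by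
  obtain ⟨m, p, Ms, h0, h1, h2, h3⟩ := hX
  refine ⟨m, p, fun i => Ms i * M, h0, h1, fun i => symplectic_mul (h2 i) hM, ?_⟩
  rw [h3, Finset.mul_sum, Finset.sum_mul]
  refine Finset.sum_congr rfl fun i _ => ?_
  rw [Matrix.mul_smul, Matrix.smul_mul, Matrix.transpose_mul]
  congr 1
  noncomm_ring

lemma perm_transpose (σ : Equiv.Perm (Fin n)) :
    (σ.permMatrix ℝ)ᵀ = Equiv.Perm.permMatrix ℝ σ⁻¹ := by
  show (σ.toPEquiv.toMatrix)ᵀ = ((σ⁻¹ : Equiv.Perm (Fin n)).toPEquiv).toMatrix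
  rw [← PEquiv.toMatrix_symm, ← Equiv.toPEquiv_symm]
  rfl

lemma perm_orth (σ : Equiv.Perm (Fin n)) :
    (σ.permMatrix ℝ)ᵀ * σ.permMatrix ℝ = 1 := by
  rw [perm_transpose]
  show ((σ⁻¹ : Equiv.Perm (Fin n)).toPEquiv).toMatrix * σ.toPEquiv.toMatrix = 1
  rw [PEquiv.toMatrix_toPEquiv_mul]
  ext i j
  simp [Matrix.submatrix_apply, PEquiv.toMatrix_apply, Equiv.toPEquiv_apply,
    Matrix.one_apply, eq_comm, Equiv.Perm.inv_def, Equiv.eq_symm_apply]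

lemma perm_orth' (σ : Equiv.Perm (Fin n)) :
    σ.permMatrix ℝ * (σ.permMatrix ℝ)ᵀ = 1 :=
  mul_eq_one_comm.mp (perm_orth σ)

lemma perm_mul_diag (f : Fin n → ℝ) (σ : Equiv.Perm (Fin n)) :
    σ.permMatrix ℝ * Matrix.diagonal f =
      Matrix.diagonal (f ∘ σ) * σ.permMatrix ℝ := by
  ext i j
  rw [Matrix.mul_diagonal, Matrix.diagonal_mul]
  simp only [Equiv.Perm.permMatrix, PEquiv.toMatrix_apply, Equiv.toPEquiv_apply,
    Option.mem_some_iff, Function.comp_apply]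
  rcases eq_or_ne (σ i) j with h | h
  · subst h; simp
  · simp [h, Ne.symm h]

lemma perm_conj (f : Fin n → ℝ) (σ : Equiv.Perm (Fin n)) :
    Matrix.diagonal (f ∘ σ) =
      ((σ.permMatrix ℝ)ᵀ)ᵀ * Matrix.diagonal f * (σ.permMatrix ℝ)ᵀ := by
  rw [Matrix.transpose_transpose, perm_mul_diag, Matrix.mul_assoc, perm_orth',
    Matrix.mul_one]

lemma blockdiag_symplectic {Q : Matrix (Fin n) (Fin n) ℝ} (hQ : Qᵀ * Q = 1) :
    IsSymplectic (Matrix.fromBlocks Q 0 0 Q) := by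
  unfold IsSymplectic
  rw [Jm, Matrix.fromBlocks_transpose, Matrix.fromBlocks_multiply,
    Matrix.fromBlocks_multiply]
  simp [hQ, Matrix.mul_neg]

lemma key (A : Matrix (Fin n ⊕ Fin n) (Fin n ⊕ Fin n) ℝ)
    (hsymm : A.IsSymm) (hcomm : A * Jm (Fin n) = Jm (Fin n) * A) :
    InSympHull A (Matrix.fromBlocks (Matrix.diagonal (Deltac A)) 0 0
      (Matrix.diagonal (Deltac A))) := by
  classical
  -- entries of A * J and J * A
  have hAJ1 : ∀ (x) (j : Fin n), (A * Jm (Fin n)) x (Sum.inl j) = - A x (Sum.inr j) := by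
    intro x j
    rw [Matrix.mul_apply, Fintype.sum_sum_type]
    simp [Jm, Matrix.one_apply, mul_ite]
  have hAJ2 : ∀ (x) (j : Fin n), (A * Jm (Fin n)) x (Sum.inr j) = A x (Sum.inl j) := by
    intro x j
    rw [Matrix.mul_apply, Fintype.sum_sum_type]
    simp [Jm, Matrix.one_apply, mul_ite]
  have hJA1 : ∀ (i : Fin n) (y), (Jm (Fin n) * A) (Sum.inl i) y = A (Sum.inr i) y := by
    intro i y
    rw [Matrix.mul_apply, Fintype.sum_sum_type]
    simp [Jm, Matrix.one_apply, ite_mul]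
  have hJA2 : ∀ (i : Fin n) (y), (Jm (Fin n) * A) (Sum.inr i) y = - A (Sum.inl i) y := by
    intro i y
    rw [Matrix.mul_apply, Fintype.sum_sum_type]
    simp [Jm, Matrix.one_apply, ite_mul]
  have hs : ∀ x y, A x y = A y x := fun x y => hsymm.apply y x
  have h1 : ∀ i j : Fin n, A (Sum.inr i) (Sum.inr j) = A (Sum.inl i) (Sum.inl j) := by
    intro i j
    have := congrFun (congrFun hcomm (Sum.inr i)) (Sum.inl j)
    rw [hAJ1, hJA2] at this
    linarith [this]
  have h2 : ∀ i j : Fin n, A (Sum.inl i) (Sum.inr j) = - A (Sum.inr i) (Sum.inl j) := by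
    intro i j
    have := congrFun (congrFun hcomm (Sum.inl i)) (Sum.inl j)
    rw [hAJ1, hJA1] at this
    linarith [this]
  -- the complex Hermitian matrix
  set H : Matrix (Fin n) (Fin n) ℂ :=
    Matrix.of fun i j => (A (Sum.inl i) (Sum.inl j) : ℂ)
      + (A (Sum.inr i) (Sum.inl j) : ℂ) * Complex.I with hHdef
  have hHre : ∀ i j, (H i j).re = A (Sum.inl i) (Sum.inl j) := by
    intro i j; simp [hHdef]
  have hHim : ∀ i j, (H i j).im = A (Sum.inr i) (Sum.inl j) := by
    intro i j; simp [hHdef]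
  have hHA : rl H = A := by
    rw [rl]
    ext x y
    cases x with
    | inl i => cases y with
      | inl j => simpa using hHre i j
      | inr j =>
        have : (Matrix.fromBlocks (H.map Complex.re) (-(H.map Complex.im))
            (H.map Complex.im) (H.map Complex.re)) (Sum.inl i) (Sum.inr j)
            = -(H i j).im := rfl
        rw [this, hHim, h2]
    | inr i => cases y with
      | inl j => simpa using hHim i j
      | inr j =>
        have : (Matrix.fromBlocks (H.map Complex.re) (-(H.map Complex.im))
            (H.map Complex.im) (H.map Complex.re)) (Sum.inr i) (Sum.inr j)
            = (H i j).re := rfl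
        rw [this, hHre, h1]
  have hH : H.IsHermitian := by
    rw [Matrix.IsHermitian]
    ext i j
    apply Complex.ext
    · simp only [Matrix.conjTranspose_apply, RingHom.coe_coe, Complex.conj_re, Complex.star_def]
      rw [hHre, hHre, hs]
    · simp only [Matrix.conjTranspose_apply, Complex.star_def, Complex.conj_im]
      rw [hHim, hHim]
      rw [hs (Sum.inr j) (Sum.inl i), h2, neg_neg]
  -- spectral theorem
  set U : Matrix (Fin n) (Fin n) ℂ := (hH.eigenvectorUnitary : Matrix (Fin n) (Fin n) ℂ)
    with hUdef
  set lam : Fin n → ℝ := hH.eigenvalues with hlamdef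
  have hU2 : star U * U = 1 := Unitary.coe_star_mul_self hH.eigenvectorUnitary
  have hU1 : U * star U = 1 := Unitary.coe_mul_star_self hH.eigenvectorUnitary
  have hdiag : star U * H * U = Matrix.diagonal (fun i => (lam i : ℂ)) :=
    by have h := hH.conjStarAlgAut_star_eigenvectorUnitary; rw [Unitary.conjStarAlgAut_star_apply] at h; exact h
  have hspec : H = U * Matrix.diagonal (fun i => (lam i : ℂ)) * star U :=
    by have h := hH.spectral_theorem; rw [Unitary.conjStarAlgAut_apply] at h; exact h
  set M0 : Matrix (Fin n ⊕ Fin n) (Fin n ⊕ Fin n) ℝ := rl U with hM0def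
  have hM0 : IsSymplectic M0 := rl_symplectic U hU2
  have hM0A : M0ᵀ * A * M0
      = Matrix.fromBlocks (Matrix.diagonal lam) 0 0 (Matrix.diagonal lam) := by
    rw [← hHA, hM0def, ← rl_star, ← rl_mul, ← rl_mul]
    rw [show Uᴴ * H * U = Matrix.diagonal (fun i => (lam i : ℂ)) from hdiag]
    exact rl_diagonal lam
  -- Schur–Horn data
  have hSchur : ∀ i, Deltac A i = ∑ j, Complex.normSq (U i j) * lam j := by
    intro i
    have hHii : H i i = ∑ j, U i j * (lam j : ℂ) * (starRingEnd ℂ) (U i j) := by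
      conv_lhs => rw [hspec]
      rw [Matrix.mul_apply]
      refine Finset.sum_congr rfl fun j _ => ?_
      rw [Matrix.mul_diagonal, Matrix.star_apply, Complex.star_def]
    have hre : (H i i).re = ∑ j, Complex.normSq (U i j) * lam j := by
      rw [hHii, Complex.re_sum]
      refine Finset.sum_congr rfl fun j _ => ?_
      rw [mul_comm (U i j), mul_assoc, Complex.mul_conj, ← Complex.ofReal_mul,
        Complex.ofReal_re, mul_comm]
    rw [← hre, Deltac, h1, hHre]
    ring
  set S : Matrix (Fin n) (Fin n) ℝ := Matrix.of fun i j => Complex.normSq (U i j)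
    with hSdef
  have hSds : S ∈ doublyStochastic ℝ (Fin n) := by
    rw [mem_doublyStochastic_iff_sum]
    refine ⟨fun i j => Complex.normSq_nonneg _, fun i => ?_, fun j => ?_⟩
    · have := congrFun (congrFun hU1 i) i
      rw [Matrix.mul_apply] at this
      simp only [Matrix.star_apply, Complex.star_def, Complex.mul_conj,
        Matrix.one_apply_eq] at this
      have := congrArg Complex.re this
      rw [Complex.re_sum] at this
      simpa [hSdef] using this
    · have := congrFun (congrFun hU2 j) j
      rw [Matrix.mul_apply] at this
      simp only [Matrix.star_apply, Complex.star_def, Matrix.one_apply_eq] at this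
      have h' : ∑ i, Complex.normSq (U i j) = ((1 : ℂ)).re := by
        rw [← this, Complex.re_sum]
        refine Finset.sum_congr rfl fun i _ => ?_
        rw [mul_comm, Complex.mul_conj, Complex.ofReal_re]
      simpa [hSdef] using h'
  obtain ⟨w, hw0, hw1, hwS⟩ := exists_eq_sum_perm_of_mem_doublyStochastic hSds
  have hSij : ∀ i j, S i j = ∑ σ : Equiv.Perm (Fin n), w σ * (σ.permMatrix ℝ) i j := by
    intro i j
    rw [← hwS]
    simp [Matrix.sum_apply]
  have hDel : ∀ i, Deltac A i = ∑ σ : Equiv.Perm (Fin n), w σ * lam (σ i) := by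
    intro i
    rw [hSchur i]
    have : ∀ j, Complex.normSq (U i j) * lam j
        = ∑ σ : Equiv.Perm (Fin n), w σ * ((σ.permMatrix ℝ) i j * lam j) := by
      intro j
      rw [show Complex.normSq (U i j) = S i j from rfl, hSij, Finset.sum_mul]
      simp [mul_assoc]
    rw [Finset.sum_congr rfl fun j _ => this j, Finset.sum_comm]
    refine Finset.sum_congr rfl fun σ _ => ?_
    rw [← Finset.mul_sum]
    congr 1
    simp only [Equiv.Perm.permMatrix, PEquiv.toMatrix_apply, Equiv.toPEquiv_apply,
      Option.mem_some_iff, ite_mul, one_mul, zero_mul]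
    simp
  -- the permuted conjugators
  set P : Equiv.Perm (Fin n) → Matrix (Fin n) (Fin n) ℝ :=
    fun σ => (σ.permMatrix ℝ)ᵀ with hPdef
  set Bm : Equiv.Perm (Fin n) → Matrix (Fin n ⊕ Fin n) (Fin n ⊕ Fin n) ℝ :=
    fun σ => Matrix.fromBlocks (P σ) 0 0 (P σ) with hBdef
  have hBsymp : ∀ σ, IsSymplectic (Bm σ) := by
    intro σ
    apply blockdiag_symplectic
    rw [hPdef, Matrix.transpose_transpose]
    exact perm_orth' σ
  set Nm : Equiv.Perm (Fin n) → Matrix (Fin n ⊕ Fin n) (Fin n ⊕ Fin n) ℝ :=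
    fun σ => M0 * Bm σ with hNdef
  have hNsymp : ∀ σ, IsSymplectic (Nm σ) := fun σ => symplectic_mul hM0 (hBsymp σ)
  have hNA : ∀ σ, (Nm σ)ᵀ * A * Nm σ
      = Matrix.fromBlocks (Matrix.diagonal (lam ∘ σ)) 0 0 (Matrix.diagonal (lam ∘ σ)) := by
    intro σ
    rw [hNdef]
    simp only [Matrix.transpose_mul]
    calc (Bm σ)ᵀ * M0ᵀ * A * (M0 * Bm σ)
        = (Bm σ)ᵀ * (M0ᵀ * A * M0) * Bm σ := by noncomm_ring
      _ = (Bm σ)ᵀ * Matrix.fromBlocks (Matrix.diagonal lam) 0 0 (Matrix.diagonal lam)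
            * Bm σ := by rw [hM0A]
      _ = Matrix.fromBlocks ((P σ)ᵀ * Matrix.diagonal lam * P σ) 0 0
            ((P σ)ᵀ * Matrix.diagonal lam * P σ) := by
          rw [hBdef]
          simp only [Matrix.fromBlocks_transpose, Matrix.fromBlocks_multiply]
          simp
      _ = _ := by
          rw [hPdef]
          congr 1 <;> rw [perm_conj lam σ]
  -- assembling the convex combination
  have hX : Matrix.fromBlocks (Matrix.diagonal (Deltac A)) 0 0 (Matrix.diagonal (Deltac A))
      = ∑ σ : Equiv.Perm (Fin n), w σ • ((Nm σ)ᵀ * A * Nm σ) := by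
    rw [Finset.sum_congr rfl fun σ _ => by rw [hNA σ]]
    ext x y
    cases x with
    | inl i => cases y with
      | inl j =>
        simp only [Matrix.sum_apply, Matrix.smul_apply, Matrix.fromBlocks_apply₁₁,
          Matrix.diagonal_apply, smul_eq_mul]
        rcases eq_or_ne i j with h | h
        · subst h
          simp only [if_pos rfl, hDel i]
          rfl
        · simp [h]
      | inr j => simp [Matrix.sum_apply]
    | inr i => cases y with
      | inl j => simp [Matrix.sum_apply]
      | inr j =>
        simp only [Matrix.sum_apply, Matrix.smul_apply, Matrix.fromBlocks_apply₂₂,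
          Matrix.diagonal_apply, smul_eq_mul]
        rcases eq_or_ne i j with h | h
        · subst h
          simp only [if_pos rfl, hDel i]
          rfl
        · simp [h]
  -- repackage over `Fin m`
  set m := Fintype.card (Equiv.Perm (Fin n)) with hm
  set e : Fin m ≃ Equiv.Perm (Fin n) := (Fintype.equivFin (Equiv.Perm (Fin n))).symm
    with he
  refine ⟨m, fun i => w (e i), fun i => Nm (e i), fun i => hw0 (e i), ?_, fun i => hNsymp (e i), ?_⟩
  · rw [Equiv.sum_comp e w]; exact hw1
  · rw [hX, ← Equiv.sum_comp e (fun σ => w σ • ((Nm σ)ᵀ * A * Nm σ))]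


lemma block_perm_conj (f : Fin n → ℝ) (σ : Equiv.Perm (Fin n)) :
    Matrix.fromBlocks (Matrix.diagonal (f ∘ σ)) 0 0 (Matrix.diagonal (f ∘ σ))
      = (Matrix.fromBlocks ((σ.permMatrix ℝ)ᵀ) 0 0 ((σ.permMatrix ℝ)ᵀ))ᵀ
        * Matrix.fromBlocks (Matrix.diagonal f) 0 0 (Matrix.diagonal f)
        * Matrix.fromBlocks ((σ.permMatrix ℝ)ᵀ) 0 0 ((σ.permMatrix ℝ)ᵀ) := by
  rw [Matrix.fromBlocks_transpose, Matrix.fromBlocks_multiply, Matrix.fromBlocks_multiply]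
  simp only [Matrix.transpose_zero, Matrix.mul_zero, Matrix.zero_mul, add_zero, zero_add,
    Matrix.mul_one, Matrix.one_mul]
  exact fromBlocks_congr (perm_conj f σ) rfl rfl (perm_conj f σ)

end SympHullAux

/-- If `AJ = JA`, every positive definite `B` with symplectic spectrum `Δ_c(A)` sorted
increasingly lies in the convex hull of the symplectic orbit of `A`; in particular
`diag(Δ_c(A)) ⊕ diag(Δ_c(A))` does. -/
theorem stmt10 {n : ℕ} (A : Matrix (Fin n ⊕ Fin n) (Fin n ⊕ Fin n) ℝ)
    (hsymm : A.IsSymm) (hpd : A.PosDef)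
    (hcomm : A * Jm (Fin n) = Jm (Fin n) * A) :
    (∀ (B : Matrix (Fin n ⊕ Fin n) (Fin n ⊕ Fin n) ℝ) (dB : Fin n → ℝ),
      B.PosDef → IsSympSpectrum B dB → Monotone dB →
      (∃ σ : Equiv.Perm (Fin n), dB = Deltac A ∘ σ) → InSympHull A B) ∧
    InSympHull A
      (Matrix.fromBlocks (Matrix.diagonal (Deltac A)) 0 0 (Matrix.diagonal (Deltac A))) := by
  have hkey := SympHullAux.key A hsymm hcomm
  refine ⟨?_, hkey⟩
  rintro B dB hBpd ⟨N, hNsymp, hNdiag⟩ hmono ⟨σ, hσ⟩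
  have hNu := SympHullAux.isUnit_of_symplectic hNsymp
  have hNinv : IsSymplectic N⁻¹ := SympHullAux.symplectic_inv hNsymp
  have hmul1 : N * N⁻¹ = 1 := Matrix.mul_nonsing_inv N hNu
  have hB : B = (N⁻¹)ᵀ *
      (Matrix.fromBlocks (Matrix.diagonal dB) 0 0 (Matrix.diagonal dB)) * N⁻¹ := by
    rw [← hNdiag]
    calc B = (N * N⁻¹)ᵀ * B * (N * N⁻¹) := by rw [hmul1]; simp
      _ = (N⁻¹)ᵀ * (Nᵀ * B * N) * N⁻¹ := by rw [Matrix.transpose_mul]; noncomm_ring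
  subst hσ
  set Bσ : Matrix (Fin n ⊕ Fin n) (Fin n ⊕ Fin n) ℝ :=
    Matrix.fromBlocks ((σ.permMatrix ℝ)ᵀ) 0 0 ((σ.permMatrix ℝ)ᵀ) with hBσ
  have hBσsymp : IsSymplectic Bσ := by
    apply SympHullAux.blockdiag_symplectic
    rw [Matrix.transpose_transpose]
    exact SympHullAux.perm_orth' σ
  have hBeq : B = (Bσ * N⁻¹)ᵀ *
      (Matrix.fromBlocks (Matrix.diagonal (Deltac A)) 0 0 (Matrix.diagonal (Deltac A)))
        * (Bσ * N⁻¹) := by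
    rw [hB, SympHullAux.block_perm_conj (Deltac A) σ, Matrix.transpose_mul]
    noncomm_ring
  rw [hBeq]
  exact SympHullAux.hull_conj hkey (SympHullAux.symplectic_mul hBσsymp hNinv)
end

section
/- Let A = [[E, F], [G, H]] be a 2n×2n real symmetric positive definite matrix in n×n blocks, and let C^s(A) = [[C(E), C(F)], [C(G), C(H)]] be its symplectic pinching with respect to a fixed block-diagonal partition n = m_1 + ... + m_k, so that C^s(A) = ⊕^s A_i is a symplectic direct sum of 2m_i × 2m_i blocks A_i. Fix symplectic matrices M_i diagonalizing A_i in the sense of Williamson and set M = ⊕^s M_i. If (M^T A M) J = J (M^T A M), then C^s(A) lies in the convex hull of the symplectic orbit of A. -/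
open Matrix BigOperators

/-- The block index of an element of `(Σ i, Fin (m i)) ⊕ (Σ i, Fin (m i))`. -/
def blkIdx {k : ℕ} {m : Fin k → ℕ} :
    ((Σ i, Fin (m i)) ⊕ (Σ i, Fin (m i))) → Fin k :=
  Sum.elim Sigma.fst Sigma.fst

/-- Symplectic pinching `C^s(A)`: zero out all entries whose row and column
block indices differ, in each of the four `n × n` blocks simultaneously. -/
def spinch {k : ℕ} {m : Fin k → ℕ}
    (A : Matrix ((Σ i, Fin (m i)) ⊕ (Σ i, Fin (m i))) ((Σ i, Fin (m i)) ⊕ (Σ i, Fin (m i))) ℝ) :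
    Matrix ((Σ i, Fin (m i)) ⊕ (Σ i, Fin (m i))) ((Σ i, Fin (m i)) ⊕ (Σ i, Fin (m i))) ℝ :=
  Matrix.of fun a b => if blkIdx a = blkIdx b then A a b else 0

/-! ### Auxiliary lemmas: pinching as an average of sign conjugations -/

/-- `±1` as a real number. -/
noncomputable def tB (b : Bool) : ℝ := if b then 1 else -1

lemma tB_mul_self (b : Bool) : tB b * tB b = 1 := by cases b <;> simp [tB]

lemma tB_not (b : Bool) : tB (!b) = -tB b := by cases b <;> simp [tB]

/-- The block-sign vector associated to `ε : Fin k → Bool`. -/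
noncomputable def sgnVec {k : ℕ} {m : Fin k → ℕ} (ε : Fin k → Bool) :
    ((Σ i, Fin (m i)) ⊕ (Σ i, Fin (m i))) → ℝ :=
  fun a => tB (ε (blkIdx a))

lemma sgnVec_eq {k : ℕ} {m : Fin k → ℕ} (ε : Fin k → Bool)
    {a b : (Σ i, Fin (m i)) ⊕ (Σ i, Fin (m i))} (h : blkIdx a = blkIdx b) :
    sgnVec (m := m) ε a * sgnVec ε b = 1 := by
  simp only [sgnVec, h]; exact tB_mul_self _

lemma blkIdx_inl {k : ℕ} {m : Fin k → ℕ} (x : Σ i, Fin (m i)) :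
    blkIdx (m := m) (Sum.inl x) = x.1 := rfl

lemma blkIdx_inr {k : ℕ} {m : Fin k → ℕ} (x : Σ i, Fin (m i)) :
    blkIdx (m := m) (Sum.inr x) = x.1 := rfl

/-- Each block-sign diagonal matrix is symplectic. -/
lemma sgn_symplectic {k : ℕ} {m : Fin k → ℕ} (ε : Fin k → Bool) :
    IsSymplectic (Matrix.diagonal (sgnVec (m := m) ε)) := by
  unfold IsSymplectic
  rw [Matrix.diagonal_transpose]
  ext a b
  rw [Matrix.mul_diagonal, Matrix.diagonal_mul]
  rcases a with x | x <;> rcases b with y | y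
  · simp [Jm]
  · by_cases h : x = y
    · subst h
      have : blkIdx (m := m) (Sum.inl x) = blkIdx (m := m) (Sum.inr x) := rfl
      have h1 := sgnVec_eq (m := m) ε this
      simp only [Jm, Matrix.fromBlocks_apply₁₂, Matrix.one_apply_eq]
      calc sgnVec ε (Sum.inl x) * 1 * sgnVec ε (Sum.inr x)
          = sgnVec ε (Sum.inl x) * sgnVec ε (Sum.inr x) := by ring
        _ = 1 := h1
    · simp [Jm, Matrix.fromBlocks_apply₁₂, Matrix.one_apply_ne h]
  · by_cases h : x = y
    · subst h
      have : blkIdx (m := m) (Sum.inr x) = blkIdx (m := m) (Sum.inl x) := rfl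
      have h1 := sgnVec_eq (m := m) ε this
      simp only [Jm, Matrix.fromBlocks_apply₂₁, Matrix.neg_apply, Matrix.one_apply_eq]
      calc sgnVec ε (Sum.inr x) * (-1) * sgnVec ε (Sum.inl x)
          = -(sgnVec ε (Sum.inr x) * sgnVec ε (Sum.inl x)) := by ring
        _ = -1 := by rw [h1]
    · simp [Jm, Matrix.fromBlocks_apply₂₁, Matrix.neg_apply, Matrix.one_apply_ne h]
  · simp [Jm]

/-- The key sign-cancellation identity. -/
lemma sum_tB_mul {k : ℕ} (i j : Fin k) :
    ∑ ε : Fin k → Bool, tB (ε i) * tB (ε j) =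
      if i = j then (Fintype.card (Fin k → Bool) : ℝ) else 0 := by
  split_ifs with h
  · subst h
    have : ∀ ε : Fin k → Bool, tB (ε i) * tB (ε i) = 1 := fun ε => tB_mul_self _
    rw [Finset.sum_congr rfl (fun ε _ => this ε)]
    simp [Finset.card_univ]
  · refine Finset.sum_involution
      (fun ε _ => Function.update ε i (!ε i)) ?_ ?_ (fun _ _ => Finset.mem_univ _) ?_
    · intro ε _
      show tB (ε i) * tB (ε j) +
        tB (Function.update ε i (!ε i) i) * tB (Function.update ε i (!ε i) j) = 0
      rw [Function.update_self, Function.update_of_ne (Ne.symm h), tB_not]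
      ring
    · intro ε _ _ hcon
      have hcon' : Function.update ε i (!ε i) = ε := hcon
      have := congrFun hcon' i
      rw [Function.update_self] at this
      cases hεi : ε i <;> rw [hεi] at this <;> simp_all
    · intro ε _
      funext x
      by_cases hx : x = i
      · subst hx; simp
      · simp [Function.update_of_ne hx]

/-- The symplectic pinching is the average of the sign conjugations. -/
lemma spinch_eq_avg {k : ℕ} {m : Fin k → ℕ}
    (A : Matrix ((Σ i, Fin (m i)) ⊕ (Σ i, Fin (m i))) ((Σ i, Fin (m i)) ⊕ (Σ i, Fin (m i))) ℝ) :
    spinch A = ∑ ε : Fin k → Bool,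
      ((Fintype.card (Fin k → Bool) : ℝ))⁻¹ •
        ((Matrix.diagonal (sgnVec (m := m) ε))ᵀ * A * Matrix.diagonal (sgnVec ε)) := by
  have hc : (Fintype.card (Fin k → Bool) : ℝ) ≠ 0 :=
    Nat.cast_ne_zero.mpr Fintype.card_ne_zero
  ext a b
  rw [Matrix.sum_apply]
  simp only [Matrix.smul_apply, Matrix.diagonal_transpose, Matrix.mul_diagonal,
    Matrix.diagonal_mul, smul_eq_mul]
  have hterm : ∀ ε ∈ (Finset.univ : Finset (Fin k → Bool)),
      (Fintype.card (Fin k → Bool) : ℝ)⁻¹ * (sgnVec (m := m) ε a * A a b * sgnVec ε b) =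
      A a b * ((Fintype.card (Fin k → Bool) : ℝ))⁻¹ * (tB (ε (blkIdx a)) * tB (ε (blkIdx b))) := by
    intro ε _
    simp only [sgnVec]
    ring
  rw [Finset.sum_congr rfl hterm, ← Finset.mul_sum, sum_tB_mul]
  by_cases h : blkIdx a = blkIdx b
  · rw [if_pos h]
    field_simp [spinch, h]
    simp [spinch, h]
  · rw [if_neg h]
    simp [spinch, h]

/-- If `M = ⊕ˢ Mᵢ` (a block-structured symplectic matrix, with the `Mᵢ`
diagonalizing the blocks `Aᵢ` of the symplectic pinching in the Williamson sense)
satisfies `(Mᵀ A M) J = J (Mᵀ A M)`, then the symplectic pinching `C^s(A)` lies in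
the convex hull of the symplectic orbit of `A`. -/
theorem stmt12 {k : ℕ} {m : Fin k → ℕ}
    (A M : Matrix ((Σ i, Fin (m i)) ⊕ (Σ i, Fin (m i))) ((Σ i, Fin (m i)) ⊕ (Σ i, Fin (m i))) ℝ)
    (hsymm : A.IsSymm) (hpd : A.PosDef)
    (hMblk : ∀ a b, blkIdx a ≠ blkIdx b → M a b = 0)
    (hM : IsSymplectic M)
    (d : (Σ i, Fin (m i)) → ℝ) (hdpos : ∀ a, 0 ≤ d a)
    (hdiag : Mᵀ * spinch A * M =
      Matrix.fromBlocks (Matrix.diagonal d) 0 0 (Matrix.diagonal d))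
    (hcomm : (Mᵀ * A * M) * Jm (Σ i, Fin (m i)) = Jm (Σ i, Fin (m i)) * (Mᵀ * A * M)) :
    InSympHull A (spinch A) := by
  classical
  have hc : (Fintype.card (Fin k → Bool) : ℝ) ≠ 0 :=
    Nat.cast_ne_zero.mpr Fintype.card_ne_zero
  refine ⟨Fintype.card (Fin k → Bool),
    fun _ => ((Fintype.card (Fin k → Bool) : ℝ))⁻¹,
    fun i => Matrix.diagonal (sgnVec (m := m) ((Fintype.equivFin (Fin k → Bool)).symm i)),
    fun _ => by positivity, ?_, fun i => sgn_symplectic _, ?_⟩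
  · rw [Finset.sum_const, Finset.card_univ, nsmul_eq_mul]
    field_simp
    simp [Fintype.card_fin]
  · rw [spinch_eq_avg A]
    exact (Equiv.sum_comp (Fintype.equivFin (Fin k → Bool)).symm
      (fun ε => ((Fintype.card (Fin k → Bool) : ℝ))⁻¹ •
        ((Matrix.diagonal (sgnVec (m := m) ε))ᵀ * A * Matrix.diagonal (sgnVec ε)))).symm
end

section
/- Let A_i be 2m_i × 2m_i real symmetric positive definite matrices for i = 1,...,k with m_1+...+m_k = n. Then the symplectic spectrum of the symplectic direct sum ⊕^s A_i is the multiset union (concatenation, reordered increasingly) of the symplectic spectra of the A_i. -/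
open Matrix BigOperators

/-- Symplectic direct sum of a family of `2mᵢ × 2mᵢ` matrices. -/
def sds {k : ℕ} {m : Fin k → ℕ}
    (M : ∀ i, Matrix (Fin (m i) ⊕ Fin (m i)) (Fin (m i) ⊕ Fin (m i)) ℝ) :
    Matrix ((Σ i, Fin (m i)) ⊕ (Σ i, Fin (m i))) ((Σ i, Fin (m i)) ⊕ (Σ i, Fin (m i))) ℝ :=
  Matrix.of fun a b =>
    match a, b with
    | Sum.inl ⟨i, a⟩, Sum.inl ⟨j, b⟩ =>
        if h : i = j then M j (Sum.inl (h ▸ a)) (Sum.inl b) else 0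
    | Sum.inl ⟨i, a⟩, Sum.inr ⟨j, b⟩ =>
        if h : i = j then M j (Sum.inl (h ▸ a)) (Sum.inr b) else 0
    | Sum.inr ⟨i, a⟩, Sum.inl ⟨j, b⟩ =>
        if h : i = j then M j (Sum.inr (h ▸ a)) (Sum.inl b) else 0
    | Sum.inr ⟨i, a⟩, Sum.inr ⟨j, b⟩ =>
        if h : i = j then M j (Sum.inr (h ▸ a)) (Sum.inr b) else 0

lemma sds_eq {k : ℕ} {m : Fin k → ℕ}
    (M : ∀ i, Matrix (Fin (m i) ⊕ Fin (m i)) (Fin (m i) ⊕ Fin (m i)) ℝ) :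
    sds M = (Matrix.blockDiagonal' M).submatrix
      (Equiv.sigmaSumDistrib (fun i => Fin (m i)) (fun i => Fin (m i))).symm
      (Equiv.sigmaSumDistrib (fun i => Fin (m i)) (fun i => Fin (m i))).symm := by
  ext a b
  rcases a with ⟨i, a⟩ | ⟨i, a⟩ <;> rcases b with ⟨j, b⟩ | ⟨j, b⟩ <;>
  · rcases eq_or_ne i j with h | h
    · subst h
      simp [sds, Matrix.blockDiagonal'_apply, Sigma.map]
    · simp [sds, h, Matrix.blockDiagonal'_apply, Sigma.map]

lemma sds_mul {k : ℕ} {m : Fin k → ℕ}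
    (M N : ∀ i, Matrix (Fin (m i) ⊕ Fin (m i)) (Fin (m i) ⊕ Fin (m i)) ℝ) :
    sds M * sds N = sds (fun i => M i * N i) := by
  rw [sds_eq, sds_eq, sds_eq, Matrix.submatrix_mul_equiv, Matrix.blockDiagonal'_mul]

lemma sds_transpose {k : ℕ} {m : Fin k → ℕ}
    (M : ∀ i, Matrix (Fin (m i) ⊕ Fin (m i)) (Fin (m i) ⊕ Fin (m i)) ℝ) :
    (sds M)ᵀ = sds (fun i => (M i)ᵀ) := by
  rw [sds_eq, sds_eq, Matrix.transpose_submatrix, Matrix.blockDiagonal'_transpose]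

lemma sds_Jm {k : ℕ} {m : Fin k → ℕ} :
    sds (fun i => Jm (Fin (m i))) = Jm (Σ i, Fin (m i)) := by
  ext a b
  rcases a with ⟨i, a⟩ | ⟨i, a⟩ <;> rcases b with ⟨j, b⟩ | ⟨j, b⟩ <;>
  · rcases eq_or_ne i j with h | h
    · subst h
      simp [sds, Jm, Matrix.one_apply, Sigma.ext_iff, heq_eq_eq]
    · simp [sds, Jm, Matrix.one_apply, Sigma.ext_iff, heq_eq_eq, h]

lemma sds_diag {k : ℕ} {m : Fin k → ℕ} (d : ∀ i, Fin (m i) → ℝ) :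
    sds (fun i => Matrix.fromBlocks (Matrix.diagonal (d i)) 0 0 (Matrix.diagonal (d i))) =
      Matrix.fromBlocks (Matrix.diagonal (fun a : Σ i, Fin (m i) => d a.1 a.2)) 0 0
        (Matrix.diagonal (fun a : Σ i, Fin (m i) => d a.1 a.2)) := by
  ext a b
  rcases a with ⟨i, a⟩ | ⟨i, a⟩ <;> rcases b with ⟨j, b⟩ | ⟨j, b⟩ <;>
  · rcases eq_or_ne i j with h | h
    · subst h
      simp [sds, Matrix.diagonal_apply, Sigma.ext_iff, heq_eq_eq]
    · simp [sds, Matrix.diagonal_apply, Sigma.ext_iff, heq_eq_eq, h]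

/-- The symplectic spectrum of a symplectic direct sum `⊕ˢ Aᵢ` is the concatenation
of the symplectic spectra of the `Aᵢ`. -/
theorem stmt14 {k : ℕ} {m : Fin k → ℕ}
    (A : ∀ i, Matrix (Fin (m i) ⊕ Fin (m i)) (Fin (m i) ⊕ Fin (m i)) ℝ)
    (hsymm : ∀ i, (A i).IsSymm) (hpd : ∀ i, (A i).PosDef)
    (d : ∀ i, Fin (m i) → ℝ) (hd : ∀ i, IsSympSpectrum (A i) (d i)) :
    IsSympSpectrum (sds A) (fun a => d a.1 a.2) := by
  choose M hM1 hM2 using hd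
  refine ⟨sds M, ?_, ?_⟩
  · show (sds M)ᵀ * Jm _ * sds M = Jm _
    rw [← sds_Jm, sds_transpose, sds_mul, sds_mul]
    exact congrArg sds (funext fun i => hM1 i)
  · rw [← sds_diag, sds_transpose, sds_mul, sds_mul]
    exact congrArg sds (funext fun i => hM2 i)
end

section
/- A 2n×2n real symmetric positive definite matrix A is orthosymplectically diagonalizable in the sense of Williamson's theorem (i.e., there is an orthogonal symplectic M with M^T A M = D ⊕ D, D diagonal positive) if and only if AJ = JA. -/
open Matrix BigOperators
open scoped ComplexOrder

section Aux

open ComplexOrder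

variable {n : ℕ}

/-- The complex `n × n` matrix associated to a real `2n × 2n` matrix commuting with `J`. -/
noncomputable def cplxAux (A : Matrix (Fin n ⊕ Fin n) (Fin n ⊕ Fin n) ℝ) :
    Matrix (Fin n) (Fin n) ℂ :=
  fun i j => ⟨A (Sum.inl i) (Sum.inl j), A (Sum.inl i) (Sum.inr j)⟩

/-- Realification of a complex matrix. -/
def realifyAux (Z : Matrix (Fin n) (Fin n) ℂ) : Matrix (Fin n ⊕ Fin n) (Fin n ⊕ Fin n) ℝ :=
  Matrix.fromBlocks (Z.map Complex.re) (Z.map Complex.im) (-(Z.map Complex.im)) (Z.map Complex.re)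

lemma realifyAux_mul (Z W : Matrix (Fin n) (Fin n) ℂ) :
    realifyAux (Z * W) = realifyAux Z * realifyAux W := by
  ext (i|i) (j|j) <;>
  · simp [realifyAux, Matrix.mul_apply, Fintype.sum_sum_type, Complex.mul_re, Complex.mul_im,
      Finset.sum_add_distrib, Finset.sum_sub_distrib, neg_add_rev]
    try ring

lemma realifyAux_conjT (Z : Matrix (Fin n) (Fin n) ℂ) :
    realifyAux Zᴴ = (realifyAux Z)ᵀ := by
  ext (i|i) (j|j) <;> simp [realifyAux, Matrix.conjTranspose_apply]

lemma realifyAux_one : realifyAux (1 : Matrix (Fin n) (Fin n) ℂ) = 1 := by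
  ext (i|i) (j|j) <;> simp [realifyAux, Matrix.one_apply] <;> split <;> simp_all

lemma realifyAux_I : realifyAux ((Complex.I : ℂ) • (1 : Matrix (Fin n) (Fin n) ℂ)) =
    Jm (Fin n) := by
  ext (i|i) (j|j) <;> simp [realifyAux, Jm, Matrix.one_apply] <;> split <;> simp_all

lemma realifyAux_diag (d : Fin n → ℝ) :
    realifyAux (Matrix.diagonal (fun i => (d i : ℂ))) =
      Matrix.fromBlocks (Matrix.diagonal d) 0 0 (Matrix.diagonal d) := by
  ext (i|i) (j|j) <;> simp [realifyAux, Matrix.diagonal] <;> split <;> simp_all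

lemma commRelAux {A : Matrix (Fin n ⊕ Fin n) (Fin n ⊕ Fin n) ℝ}
    (h : A * Jm (Fin n) = Jm (Fin n) * A) :
    (∀ i j, A (Sum.inr i) (Sum.inl j) = -A (Sum.inl i) (Sum.inr j)) ∧
    (∀ i j, A (Sum.inr i) (Sum.inr j) = A (Sum.inl i) (Sum.inl j)) := by
  constructor
  · intro i j
    have h1 := congrFun (congrFun h (Sum.inl i)) (Sum.inl j)
    simp [Jm, Matrix.mul_apply, Fintype.sum_sum_type, Matrix.one_apply, Finset.sum_ite_eq,
      Finset.sum_ite_eq'] at h1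
    linarith
  · intro i j
    have h1 := congrFun (congrFun h (Sum.inl i)) (Sum.inr j)
    simp [Jm, Matrix.mul_apply, Fintype.sum_sum_type, Matrix.one_apply, Finset.sum_ite_eq,
      Finset.sum_ite_eq'] at h1
    linarith

lemma realifyAux_cplxAux {A : Matrix (Fin n ⊕ Fin n) (Fin n ⊕ Fin n) ℝ}
    (h1 : ∀ i j, A (Sum.inr i) (Sum.inl j) = -A (Sum.inl i) (Sum.inr j))
    (h2 : ∀ i j, A (Sum.inr i) (Sum.inr j) = A (Sum.inl i) (Sum.inl j)) :
    realifyAux (cplxAux A) = A := by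
  ext (i|i) (j|j) <;> simp [realifyAux, cplxAux, h1, h2]

lemma cplxAux_hermitian {A : Matrix (Fin n ⊕ Fin n) (Fin n ⊕ Fin n) ℝ}
    (hsymm : A.IsSymm)
    (h1 : ∀ i j, A (Sum.inr i) (Sum.inl j) = -A (Sum.inl i) (Sum.inr j)) :
    (cplxAux A).IsHermitian := by
  ext i j
  have hs1 := congrFun (congrFun hsymm (Sum.inl i)) (Sum.inl j)
  have hs2 := congrFun (congrFun hsymm (Sum.inl i)) (Sum.inr j)
  simp [Matrix.transpose_apply] at hs1 hs2
  simp [cplxAux, Matrix.conjTranspose_apply, Complex.ext_iff, hs1]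
  rw [← hs2, h1 j i]
  try ring

lemma cplxAux_posdef {A : Matrix (Fin n ⊕ Fin n) (Fin n ⊕ Fin n) ℝ}
    (hsymm : A.IsSymm) (hpd : A.PosDef)
    (h1 : ∀ i j, A (Sum.inr i) (Sum.inl j) = -A (Sum.inl i) (Sum.inr j))
    (h2 : ∀ i j, A (Sum.inr i) (Sum.inr j) = A (Sum.inl i) (Sum.inl j)) :
    (cplxAux A).PosDef := by
  have hH := cplxAux_hermitian hsymm h1
  refine Matrix.PosDef.of_dotProduct_mulVec_pos hH fun z hz => ?_
  set c : ℂ := star z ⬝ᵥ (cplxAux A) *ᵥ z with hc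
  have hreal : (starRingEnd ℂ) c = c := by
    have : star c = star ((cplxAux A) *ᵥ z) ⬝ᵥ z := by
      rw [hc, Matrix.star_dotProduct, star_star]
    rw [Matrix.star_mulVec, hH] at this
    rw [← Matrix.dotProduct_mulVec] at this
    exact this.trans hc.symm
  set x : (Fin n ⊕ Fin n) → ℝ := Sum.elim (fun i => (z i).re) (fun i => -(z i).im) with hx
  have hxne : x ≠ 0 := by
    intro h0
    apply hz
    funext i
    have e1 := congrFun h0 (Sum.inl i)
    have e2 := congrFun h0 (Sum.inr i)
    simp [hx] at e1 e2
    exact Complex.ext e1 (by simpa using e2)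
  have hre : c.re = x ⬝ᵥ A *ᵥ x := by
    rw [hc]
    simp only [dotProduct, Matrix.mulVec, Pi.star_apply, Fintype.sum_sum_type,
      Complex.re_sum, hx, Sum.elim_inl, Sum.elim_inr, cplxAux]
    rw [← Finset.sum_add_distrib]
    refine Finset.sum_congr rfl fun i _ => ?_
    simp only [Complex.mul_re, Complex.mul_im, Complex.re_sum, Complex.im_sum,
      RCLike.star_def, Complex.conj_re, Complex.conj_im, Finset.mul_sum,
      ← Finset.sum_add_distrib, ← Finset.sum_sub_distrib]
    refine Finset.sum_congr rfl fun j _ => ?_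
    simp only [Complex.mul_re, Complex.mul_im, h1, h2]
    ring
  have hpos : 0 < c.re := by
    have := hpd.dotProduct_mulVec_pos hxne
    rw [hre]
    simpa using this
  rw [Complex.lt_def]
  constructor
  · simpa using hpos
  · have := (Complex.conj_eq_iff_im).mp hreal
    simpa using this.symm

end Aux

/-- A positive definite matrix is orthosymplectically diagonalizable in the sense of
Williamson iff it commutes with `J`. -/
theorem stmt16 {n : ℕ} (A : Matrix (Fin n ⊕ Fin n) (Fin n ⊕ Fin n) ℝ)
    (hsymm : A.IsSymm) (hpd : A.PosDef) :
    (∃ (M : Matrix (Fin n ⊕ Fin n) (Fin n ⊕ Fin n) ℝ) (D : Fin n → ℝ),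
      Mᵀ * M = 1 ∧ IsSymplectic M ∧ (∀ i, 0 < D i) ∧
      Mᵀ * A * M = Matrix.fromBlocks (Matrix.diagonal D) 0 0 (Matrix.diagonal D)) ↔
    A * Jm (Fin n) = Jm (Fin n) * A := by
  constructor
  · rintro ⟨M, D, hMM, hS, hD, hdiag⟩
    set Dk := Matrix.fromBlocks (Matrix.diagonal D) 0 0 (Matrix.diagonal D) with hDk
    have hMMt : M * Mᵀ = 1 := mul_eq_one_comm.mp hMM
    have hA : A = M * Dk * Mᵀ := by
      have h : M * (Mᵀ * A * M) * Mᵀ = M * Dk * Mᵀ := by rw [hdiag]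
      rw [show M * (Mᵀ * A * M) * Mᵀ = (M * Mᵀ) * A * (M * Mᵀ) by noncomm_ring,
        hMMt, one_mul, mul_one] at h
      exact h
    have hJM : M * Jm (Fin n) = Jm (Fin n) * M := by
      have e : M * (Mᵀ * Jm (Fin n) * M) = M * Jm (Fin n) := by rw [hS]
      rw [show M * (Mᵀ * Jm (Fin n) * M) = (M * Mᵀ) * Jm (Fin n) * M by noncomm_ring,
        hMMt, one_mul] at e
      exact e.symm
    have hJMt : Mᵀ * Jm (Fin n) = Jm (Fin n) * Mᵀ := by
      have e : (Mᵀ * Jm (Fin n) * M) * Mᵀ = Jm (Fin n) * Mᵀ := by rw [hS]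
      rw [show (Mᵀ * Jm (Fin n) * M) * Mᵀ = Mᵀ * Jm (Fin n) * (M * Mᵀ) by noncomm_ring,
        hMMt, mul_one] at e
      exact e
    have hDJ : Dk * Jm (Fin n) = Jm (Fin n) * Dk := by
      simp [hDk, Jm, Matrix.fromBlocks_multiply, -Matrix.fromBlocks_diagonal]
    rw [hA]
    calc M * Dk * Mᵀ * Jm (Fin n) = M * Dk * (Mᵀ * Jm (Fin n)) := by rw [Matrix.mul_assoc]
      _ = M * Dk * (Jm (Fin n) * Mᵀ) := by rw [hJMt]
      _ = M * (Dk * Jm (Fin n)) * Mᵀ := by noncomm_ring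
      _ = M * (Jm (Fin n) * Dk) * Mᵀ := by rw [hDJ]
      _ = (M * Jm (Fin n)) * (Dk * Mᵀ) := by noncomm_ring
      _ = (Jm (Fin n) * M) * (Dk * Mᵀ) := by rw [hJM]
      _ = Jm (Fin n) * (M * Dk * Mᵀ) := by noncomm_ring
  · intro hcomm
    obtain ⟨h1, h2⟩ := commRelAux hcomm
    have hHpd : (cplxAux A).PosDef := cplxAux_posdef hsymm hpd h1 h2
    have hH : (cplxAux A).IsHermitian := hHpd.1
    set U : Matrix (Fin n) (Fin n) ℂ := (hH.eigenvectorUnitary : Matrix (Fin n) (Fin n) ℂ)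
      with hU
    have hUU : Uᴴ * U = 1 := by
      rw [← Matrix.star_eq_conjTranspose]
      exact Unitary.coe_star_mul_self hH.eigenvectorUnitary
    have hUUt : U * Uᴴ = 1 := by
      rw [← Matrix.star_eq_conjTranspose]
      exact Unitary.coe_mul_star_self hH.eigenvectorUnitary
    refine ⟨realifyAux U, hH.eigenvalues, ?_, ?_, fun i => hHpd.eigenvalues_pos i, ?_⟩
    · rw [← realifyAux_conjT, ← realifyAux_mul, hUU, realifyAux_one]
    · show (realifyAux U)ᵀ * Jm (Fin n) * realifyAux U = Jm (Fin n)
      rw [← realifyAux_conjT, ← realifyAux_I, ← realifyAux_mul, ← realifyAux_mul,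
        mul_smul_comm, mul_one, smul_mul_assoc, hUU, realifyAux_I]
    · have hAeq : realifyAux (cplxAux A) = A := realifyAux_cplxAux h1 h2
      have hkey : realifyAux (Uᴴ * cplxAux A * U) = (realifyAux U)ᵀ * A * realifyAux U := by
        rw [realifyAux_mul, realifyAux_mul, realifyAux_conjT, hAeq]
      rw [← hkey]
      have hspec : Uᴴ * (cplxAux A) * U =
          Matrix.diagonal (fun i => (hH.eigenvalues i : ℂ)) := by
        have := hH.conjStarAlgAut_star_eigenvectorUnitary
        rw [Unitary.conjStarAlgAut_star_apply] at this
        rw [← Matrix.star_eq_conjTranspose]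
        exact this
      rw [hspec, realifyAux_diag]
end
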